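/- arXiv:1711.10876 — 5 statements merged into one kernel-verified Lean document; each statement's English description precedes it below -/
import Mathlib

section
/- Let q be an odd prime power and S a set of q+2 points of PG(2,q). Let S_0 be the set of points x of S such that every one of the q+1 lines through x is a bi-secant of S. Then |S_0| ≤ 2. -/
open Projectivization

abbrev Pt (F : Type) [Field F] : Type := Projectivization F (Fin 3 → F)

def IsLine (F : Type) [Field F] (W : Submodule F (Fin 3 → F)) : Prop :=
  Module.finrank F W = 2

noncomputable def secantCount (F : Type) [Field F] (S : Set (Pt F))
    (W : Submodule F (Fin 3 → F)) : ℕ :=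
  {p ∈ S | p.submodule ≤ W}.ncard

noncomputable def oddSecants (F : Type) [Field F] (S : Set (Pt F)) : ℕ :=
  {W : Submodule F (Fin 3 → F) | IsLine F W ∧ Odd (secantCount F S W)}.ncard

noncomputable def linesThroughWithCount (F : Type) [Field F] (S : Set (Pt F))
    (x : Pt F) (i : ℕ) : ℕ :=
  {W : Submodule F (Fin 3 → F) | IsLine F W ∧ x.submodule ≤ W ∧ secantCount F S W = i}.ncard

noncomputable def S43 (F : Type) [Field F] [Fintype F] (S : Set (Pt F)) : Set (Pt F) :=
  {x ∈ S | linesThroughWithCount F S x 1 = 1 ∧ linesThroughWithCount F S x 3 = 1 ∧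
    linesThroughWithCount F S x 2 = Fintype.card F - 1}

/-! Three points of `S` all of whose lines are bisecants are not collinear, so their
representatives form a basis of `F³`. Every other point `s` of `S` then has three nonzero
coordinates `c₀, c₁, c₂`, and the ratio `c_{i+1} / c_{i+2}` determines the line joining `s` to the
`i`-th basis point. As that line is a bisecant, each of the three ratio maps is injective on the
`q - 1` remaining points, hence a bijection onto `Fˣ`, whose product is `-1` (Wilson). The three
ratios of a single point multiply to `1`, so `(-1)³ = 1`, i.e. `q` is even. -/

open Submodule Function

theorem Fin.eq_add_one_or_eq_add_two {i m : Fin 3} (h : m ≠ i) : m = i + 1 ∨ m = i + 2 := by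
  revert i m; decide

namespace Module.Basis

variable {R M : Type*} [Semiring R] [AddCommMonoid M] [Module R M] (B : Basis (Fin 3) R M)
  {v : M} {i : Fin 3}

theorem mem_span_pair_of_repr_eq_zero (h : B.repr v i = 0) :
    v ∈ span R {B (i + 1), B (i + 2)} := by
  rw [← Set.image_pair, B.mem_span_image]
  intro m hm
  have hmi : m ≠ i := by rintro rfl; exact Finsupp.mem_support_iff.1 hm h
  rcases Fin.eq_add_one_or_eq_add_two hmi with rfl | rfl <;> simp

theorem mem_span_singleton_of_repr_eq_zero (h₁ : B.repr v (i + 1) = 0)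
    (h₂ : B.repr v (i + 2) = 0) : v ∈ span R {B i} := by
  rw [← Set.image_singleton, B.mem_span_image]
  intro m hm
  by_contra hmi
  rcases Fin.eq_add_one_or_eq_add_two hmi with rfl | rfl <;> simp_all

end Module.Basis

theorem prod_div_add_eq_one {G K : Type*} [AddGroup G] [Fintype G] [CommGroupWithZero K]
    {c : G → K} (hc : ∀ i, c i ≠ 0) (a b : G) : ∏ i, c (i + a) / c (i + b) = 1 := by
  rw [Finset.prod_div_distrib,
    Fintype.prod_equiv (Equiv.addRight a) (fun i => c (i + a)) c fun _ => rfl,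
    Fintype.prod_equiv (Equiv.addRight b) (fun i => c (i + b)) c fun _ => rfl]
  exact div_self (Finset.prod_ne_zero_iff.2 fun i _ => hc i)

namespace FiniteField

variable {F : Type*} [Field F] [Fintype F] {ι : Type*} [Fintype ι]

theorem prod_eq_neg_one_of_injective {g : ι → F} (hg : Injective g) (hg0 : ∀ i, g i ≠ 0)
    (hι : Fintype.card ι = Fintype.card F - 1) : ∏ i, g i = -1 := by
  classical
  let u : ι → Fˣ := fun i => Units.mk0 (g i) (hg0 i)
  have hu : Bijective u := by
    refine (Fintype.bijective_iff_injective_and_card u).2 ⟨fun i j h => hg ?_, ?_⟩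
    · simpa [u] using congrArg Units.val h
    · rw [hι, Fintype.card_units]
  have hprod : ∏ i, u i = -1 := by
    rw [← prod_univ_units_id_eq_neg_one]
    exact Fintype.prod_bijective u hu _ _ fun _ => rfl
  simpa [u] using congrArg Units.val hprod

theorem neg_one_pow_card_eq_one {κ : Type*} [Fintype κ] {f : κ → ι → F}
    (hf : ∀ k, Injective (f k)) (hprod : ∀ i, ∏ k, f k i = 1)
    (hι : Fintype.card ι = Fintype.card F - 1) : (-1 : F) ^ Fintype.card κ = 1 := by
  have hf0 (k : κ) (i : ι) : f k i ≠ 0 :=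
    Finset.prod_ne_zero_iff.1 (hprod i ▸ one_ne_zero) k (Finset.mem_univ k)
  calc (-1 : F) ^ Fintype.card κ = ∏ k, ∏ i, f k i := by
        simp [prod_eq_neg_one_of_injective (hf _) (hf0 _) hι]
    _ = 1 := by rw [Finset.prod_comm]; simp [hprod]

end FiniteField

variable {F : Type} [Field F]

theorem Projectivization.submodule_le_iff_rep_mem {p : Pt F} {W : Submodule F (Fin 3 → F)} :
    p.submodule ≤ W ↔ p.rep ∈ W := by
  rw [submodule_eq, span_singleton_le_iff_mem]

theorem isLine_span_pair {p q : Pt F} (h : p ≠ q) : IsLine F (span F {p.rep, q.rep}) := by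
  have := finrank_span_eq_card (linearIndependent_pair_iff_ne.2 h)
  rwa [Matrix.range_cons_cons_empty, Fintype.card_fin] at this

def IsWeightZero (S : Set (Pt F)) (x : Pt F) : Prop :=
  ∀ W, IsLine F W → x.submodule ≤ W → secantCount F S W = 2

theorem IsWeightZero.eq_or_eq_of_rep_mem_span {S : Set (Pt F)} {x p r : Pt F}
    (hx : IsWeightZero S x) (hxS : x ∈ S) (hpS : p ∈ S) (hrS : r ∈ S) (hxp : x ≠ p)
    (hr : r.rep ∈ span F {x.rep, p.rep}) : r = x ∨ r = p := by
  by_contra! hne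
  have hsec := hx _ (isLine_span_pair hxp)
    (submodule_le_iff_rep_mem.2 (subset_span (Set.mem_insert _ _)))
  rw [secantCount] at hsec
  have hsub : ({x, p, r} : Set (Pt F)) ⊆ {s ∈ S | s.submodule ≤ span F {x.rep, p.rep}} := by
    rintro s (rfl | rfl | rfl) <;> refine ⟨‹_›, submodule_le_iff_rep_mem.2 ?_⟩
    · exact subset_span (by simp)
    · exact subset_span (by simp)
    · exact hr
  have h3 : ({x, p, r} : Set (Pt F)).ncard = 3 := by
    rw [Set.ncard_insert_of_notMem (by simp [hxp, Ne.symm hne.1]), Set.ncard_pair (Ne.symm hne.2)]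
  have := Set.ncard_le_ncard hsub (Set.finite_of_ncard_ne_zero (by omega))
  omega

theorem IsWeightZero.linearIndependent {S : Set (Pt F)} {x y z : Pt F} (hy : IsWeightZero S y)
    (hxS : x ∈ S) (hyS : y ∈ S) (hzS : z ∈ S) (hxy : x ≠ y) (hxz : x ≠ z) (hyz : y ≠ z) :
    LinearIndependent F ![x.rep, y.rep, z.rep] := by
  refine linearIndependent_finCons.2 ⟨linearIndependent_pair_iff_ne.2 hyz, fun hx => ?_⟩
  rw [Matrix.range_cons_cons_empty] at hx
  rcases hy.eq_or_eq_of_rep_mem_span hyS hzS hxS hyz hx with h | h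
  exacts [hxy h, hxz h]

section Coordinates

variable {S : Set (Pt F)} {p : Fin 3 → Pt F} {B : Module.Basis (Fin 3) F (Fin 3 → F)}

theorem repr_rep_ne_zero (hB : ∀ i, B i = (p i).rep) (hpS : ∀ i, p i ∈ S)
    (hp : ∀ i, IsWeightZero S (p i)) {s : Pt F} (hs : s ∈ S \ Set.range p) (i : Fin 3) :
    B.repr s.rep i ≠ 0 := by
  intro h0
  have hpinj : Injective p := fun j k h => B.injective (by rw [hB, hB, h])
  have hmem := B.mem_span_pair_of_repr_eq_zero h0
  rw [hB, hB] at hmem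
  rcases (hp _).eq_or_eq_of_rep_mem_span (hpS _) (hpS _) hs.1 (hpinj.ne (by simp)) hmem with h | h
  <;> exact hs.2 ⟨_, h.symm⟩

theorem eq_of_repr_div_eq (hB : ∀ i, B i = (p i).rep) (hpS : ∀ i, p i ∈ S)
    (hp : ∀ i, IsWeightZero S (p i)) {s s' : Pt F} (hs : s ∈ S \ Set.range p)
    (hs' : s' ∈ S \ Set.range p) (i : Fin 3)
    (h : B.repr s.rep (i + 1) / B.repr s.rep (i + 2) =
      B.repr s'.rep (i + 1) / B.repr s'.rep (i + 2)) : s = s' := by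
  set d := B.repr s.rep (i + 2)
  set d' := B.repr s'.rep (i + 2)
  have hd : d ≠ 0 := repr_rep_ne_zero hB hpS hp hs _
  have hd' : d' ≠ 0 := repr_rep_ne_zero hB hpS hp hs' _
  have hv : d • s'.rep - d' • s.rep ∈ span F {B i} := by
    apply B.mem_span_singleton_of_repr_eq_zero
    · rw [div_eq_div_iff hd hd'] at h
      simp only [map_sub, map_smul, Finsupp.coe_sub, Finsupp.coe_smul, Pi.sub_apply,
        Pi.smul_apply, smul_eq_mul]
      linear_combination -h
    · simp [d, d', mul_comm]
  have hmem : d • s'.rep ∈ span F {(p i).rep, s.rep} := by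
    rw [hB] at hv
    have := add_mem (span_mono (Set.singleton_subset_iff.2 (Set.mem_insert _ {s.rep})) hv)
      (smul_mem _ d' (subset_span (Set.mem_insert_of_mem (p i).rep rfl)))
    rwa [sub_add_cancel] at this
  rcases (hp i).eq_or_eq_of_rep_mem_span (hpS i) hs.1 hs'.1 (fun h => hs.2 ⟨i, h⟩)
    ((smul_mem_iff _ hd).1 hmem) with h | h
  · exact absurd ⟨i, h.symm⟩ hs'.2
  · exact h.symm

theorem ringChar_eq_two_of_isWeightZero [Fintype F] (hB : ∀ i, B i = (p i).rep)
    (hpS : ∀ i, p i ∈ S) (hp : ∀ i, IsWeightZero S (p i))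
    (hcard : (S \ Set.range p).ncard = Fintype.card F - 1) : ringChar F = 2 := by
  have := Fintype.ofFinite ↥(S \ Set.range p)
  have h := FiniteField.neg_one_pow_card_eq_one
    (f := fun i (s : ↥(S \ Set.range p)) => B.repr s.1.rep (i + 1) / B.repr s.1.rep (i + 2))
    (fun i s s' h => Subtype.ext (eq_of_repr_div_eq hB hpS hp s.2 s'.2 i h))
    (fun s => prod_div_add_eq_one (repr_rep_ne_zero hB hpS hp s.2) 1 2)
    (by rwa [Fintype.card_eq_nat_card, Nat.card_coe_set_eq])
  rw [Fintype.card_fin, Odd.neg_one_pow (by decide)] at h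
  exact neg_one_eq_one_iff.1 h

end Coordinates

/-- If every one of the `q+1` lines through `x ∈ S` is a bi-secant of `S`, for `|S| = q + 2`
and `q` odd, then there are at most two such points. -/
theorem card_weight_zero_le_two (F : Type) [Field F] [Fintype F]
    (hq : Odd (Fintype.card F))
    (S : Set (Pt F)) (hS : S.ncard = Fintype.card F + 2) :
    {x ∈ S | ∀ W : Submodule F (Fin 3 → F), IsLine F W → x.submodule ≤ W →
      secantCount F S W = 2}.ncard ≤ 2 := by
  by_contra! h
  obtain ⟨x, ⟨hxS, hx⟩, y, ⟨hyS, hy⟩, z, ⟨hzS, hz⟩, hxy, hxz, hyz⟩ :=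
    (Set.two_lt_ncard (Set.toFinite _)).1 h
  let p : Fin 3 → Pt F := ![x, y, z]
  have hpS : ∀ i, p i ∈ S := by intro i; fin_cases i <;> assumption
  have hp : ∀ i, IsWeightZero S (p i) := by intro i; fin_cases i; exacts [hx, hy, hz]
  have hind : LinearIndependent F (Projectivization.rep ∘ p) := by
    rw [← FinVec.map_eq]
    exact IsWeightZero.linearIndependent hy hxS hyS hzS hxy hxz hyz
  let B := basisOfLinearIndependentOfCardEqFinrank hind (by simp)
  have hB : ∀ i, B i = (p i).rep := by simp [B]
  have hcard : (S \ Set.range p).ncard = Fintype.card F - 1 := by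
    rw [Set.ncard_sdiff (Set.range_subset_iff.2 hpS), hS,
      Set.ncard_range_of_injective hind.injective.of_comp, Nat.card_fin]
    omega
  have := FiniteField.even_card_of_char_two (ringChar_eq_two_of_isWeightZero hB hpS hp hcard)
  exact Nat.not_even_iff_odd.2 hq (Nat.even_iff.2 this)
end

section
/- Let q be a prime power and S a set of q+2 points of PG(2,q). Suppose x ∈ S is a point such that all q+1 lines through x are bi-secants of S, and let y, z ∈ S∖{x} be distinct. Then the vector representatives of x, y, z form a basis of F_q^3, and writing each point s ∈ S∖{x,y,z} in coordinates (s_1,s_2,s_3) with respect to this basis, one has s_2 ≠ 0 and s_3 ≠ 0 for every such s, and ∏_{s ∈ S∖{x,y,z}} (−s_2/s_3) = −1 (each factor −s_2/s_3 depends only on the point s, not on the chosen representative vector). -/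
open Projectivization

/-! Since every line through `x` is a bi-secant, no two further points of `S` are collinear
with `x`: projection from `x` maps `S \ {x}` injectively, hence bijectively, onto the `q + 1`
lines through `x`. In the basis `(x, y, z)` the line joining `x` and `s` is determined by the
ratio `s₂ : s₃`, and `y`, `z` take the ratios `1 : 0` and `0 : 1`. So `s ↦ -s₂/s₃` is a
bijection from `S \ {x, y, z}` onto `Fˣ`, whose product is `-1` (Wilson). -/

theorem FiniteField.prod_univ_erase_zero {K : Type*} [Field K] [Fintype K] [DecidableEq K] :
    ∏ a ∈ Finset.univ.erase (0 : K), a = -1 := by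
  have := Fintype.ofFinite Kˣ
  calc ∏ a ∈ Finset.univ.erase (0 : K), a = ∏ u : Kˣ, (u : K) :=
        (Finset.prod_nbij (fun u : Kˣ => (u : K)) (by simp) Units.val_injective.injOn
          (fun a ha => ⟨Units.mk0 a (Finset.ne_of_mem_erase ha), by simp, rfl⟩)
          (fun _ _ => rfl)).symm
    _ = -1 := by
      rw [← Units.coe_prod, prod_univ_units_id_eq_neg_one, Units.val_neg, Units.val_one]

theorem FiniteField.prod_eq_neg_one_of_injOn {K ι : Type*} [Field K] [Fintype K]
    {T : Finset ι} {f : ι → K} (hcard : T.card + 1 = Fintype.card K)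
    (hf : ∀ i ∈ T, f i ≠ 0) (hinj : Set.InjOn f T) : ∏ i ∈ T, f i = -1 := by
  classical
  have himage : T.image f = Finset.univ.erase 0 := by
    refine Finset.eq_of_subset_of_card_le (fun a ha => ?_) ?_
    · obtain ⟨i, hi, rfl⟩ := Finset.mem_image.1 ha
      exact Finset.mem_erase.2 ⟨hf i hi, Finset.mem_univ _⟩
    · rw [Finset.card_erase_of_mem (Finset.mem_univ _), Finset.card_univ,
        Finset.card_image_of_injOn hinj]
      omega
  rw [← prod_univ_erase_zero, ← himage, Finset.prod_image hinj]

section LinearAlgebra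

variable {F V : Type*} [Field F] [AddCommGroup V] [Module F V]

theorem mem_span_pair_of_not_linearIndependent {u v w : V}
    (hvw : LinearIndependent F ![v, w]) (h : ¬ LinearIndependent F ![u, v, w]) :
    u ∈ Submodule.span F {v, w} := by
  rw [show (![u, v, w] : Fin 3 → V) = Fin.cons u ![v, w] from rfl, linearIndependent_finCons]
    at h
  simpa [hvw, Matrix.range_cons, Matrix.range_empty, Set.pair_comm] using h

theorem Module.Basis.minor_ne_zero_of_linearIndependent (b : Module.Basis (Fin 3) F V)
    {v w : V}
    (h : LinearIndependent F ![b 0, v, w]) :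
    b.repr v 1 * b.repr w 2 - b.repr v 2 * b.repr w 1 ≠ 0 := by
  have hspan := h.span_eq_top_of_card_eq_finrank (by simp [Module.finrank_eq_card_basis b])
  have hdet := (b.is_basis_iff_det.1 ⟨h, hspan⟩).ne_zero
  simp only [Module.Basis.det_apply, Matrix.det_fin_three, Module.Basis.toMatrix_apply] at hdet
  simpa [mul_comm (b.repr w 1)] using hdet

theorem Module.Basis.repr_one_ne_zero_of_linearIndependent (b : Module.Basis (Fin 3) F V)
    {w : V}
    (h : LinearIndependent F ![b 0, b 2, w]) : b.repr w 1 ≠ 0 := by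
  simpa using b.minor_ne_zero_of_linearIndependent h

theorem Module.Basis.repr_two_ne_zero_of_linearIndependent (b : Module.Basis (Fin 3) F V)
    {w : V}
    (h : LinearIndependent F ![b 0, b 1, w]) : b.repr w 2 ≠ 0 := by
  simpa using b.minor_ne_zero_of_linearIndependent h

theorem Module.Basis.prod_neg_div_repr_eq_neg_one [Fintype F] (b : Module.Basis (Fin 3) F V)
    {ι : Type*} {v : ι → V} {T : Finset ι}
    (hcard : T.card + 1 = Fintype.card F)
    (hb2 : ∀ i ∈ T, LinearIndependent F ![b 0, b 2, v i])
    (hb1 : ∀ i ∈ T, LinearIndependent F ![b 0, b 1, v i])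
    (hT : ∀ i ∈ T, ∀ j ∈ T, i ≠ j → LinearIndependent F ![b 0, v i, v j]) :
    ∏ i ∈ T, -b.repr (v i) 1 / b.repr (v i) 2 = -1 := by
  refine FiniteField.prod_eq_neg_one_of_injOn hcard (fun i hi => ?_) (fun i hi j hj hij => ?_)
  · exact div_ne_zero (neg_ne_zero.2 (b.repr_one_ne_zero_of_linearIndependent (hb2 i hi)))
      (b.repr_two_ne_zero_of_linearIndependent (hb1 i hi))
  · by_contra hne
    refine b.minor_ne_zero_of_linearIndependent (hT i hi j hj hne) ?_
    rw [div_eq_div_iff (b.repr_two_ne_zero_of_linearIndependent (hb1 i hi))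
      (b.repr_two_ne_zero_of_linearIndependent (hb1 j hj))] at hij
    linear_combination -hij

theorem Projectivization.linearIndependent_rep_pair {p q : Projectivization F V} (h : p ≠ q) :
    LinearIndependent F ![p.rep, q.rep] := by
  have := (independent_iff.1 ((independent_pair_iff_ne p q).2 h))
  convert this using 1
  ext i : 1
  fin_cases i <;> rfl

end LinearAlgebra

section Plane

variable {F : Type} [Field F]

theorem isLine_span_pair_s3 {u v : Fin 3 → F} (h : LinearIndependent F ![u, v]) :
    IsLine F (Submodule.span F {u, v}) := by
  rw [IsLine, show ({u, v} : Set (Fin 3 → F)) = Set.range ![u, v] by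
    simp [Matrix.range_cons, Matrix.range_empty, Set.pair_comm], finrank_span_eq_card h]
  simp

theorem three_le_secantCount {S : Set (Pt F)} (hS : S.Finite) {W : Submodule F (Fin 3 → F)}
    {p q r : Pt F} (hp : p ∈ S) (hq : q ∈ S) (hr : r ∈ S)
    (hpq : p ≠ q) (hpr : p ≠ r) (hqr : q ≠ r)
    (hpW : p.rep ∈ W) (hqW : q.rep ∈ W) (hrW : r.rep ∈ W) :
    3 ≤ secantCount F S W := by
  have hsub : {p, q, r} ⊆ {a ∈ S | a.submodule ≤ W} := by
    simp only [Set.insert_subset_iff, Set.singleton_subset_iff, Set.mem_ofPred_eq,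
      Projectivization.submodule_eq, Submodule.span_singleton_le_iff_mem]
    exact ⟨⟨hp, hpW⟩, ⟨hq, hqW⟩, ⟨hr, hrW⟩⟩
  calc 3 = ({p, q, r} : Set (Pt F)).ncard :=
        (Set.ncard_eq_three.2 ⟨p, q, r, hpq, hpr, hqr, rfl⟩).symm
    _ ≤ secantCount F S W := Set.ncard_le_ncard hsub (hS.subset fun _ ha => ha.1)

theorem linearIndependent_rep_of_secantCount_le_two {S : Set (Pt F)} (hS : S.Finite)
    {x p q : Pt F}
    (hsec : ∀ W, IsLine F W → x.submodule ≤ W → secantCount F S W ≤ 2)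
    (hx : x ∈ S) (hp : p ∈ S) (hq : q ∈ S) (hxp : x ≠ p) (hxq : x ≠ q) (hpq : p ≠ q) :
    LinearIndependent F ![x.rep, p.rep, q.rep] := by
  by_contra hdep
  have hpq' := linearIndependent_rep_pair hpq
  have hxW := mem_span_pair_of_not_linearIndependent hpq' hdep
  have hW := isLine_span_pair_s3 hpq'
  have := three_le_secantCount hS hx hp hq hxp hxq hpq hxW
    (Submodule.subset_span (by simp)) (Submodule.subset_span (by simp))
  have := hsec _ hW (by rwa [Projectivization.submodule_eq, Submodule.span_singleton_le_iff_mem])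
  omega

end Plane

/-- Segre-type product identity at a point `x` of a `(q+2)`-set all of whose lines are
bi-secants: with respect to the basis formed by representatives of `x`, `y`, `z`, the
coordinates `s₂, s₃` of every further point of `S` are nonzero and the product of the
factors `-s₂/s₃` equals `-1`. -/
theorem product_identity_at_internal_nucleus (F : Type) [Field F] [Fintype F]
    [DecidableEq (Pt F)]
    (S : Finset (Pt F)) (hS : S.card = Fintype.card F + 2)
    (x y z : Pt F) (hx : x ∈ S) (hy : y ∈ S) (hz : z ∈ S)
    (hxy : x ≠ y) (hxz : x ≠ z) (hyz : y ≠ z)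
    (hbisec : ∀ W : Submodule F (Fin 3 → F), IsLine F W → x.submodule ≤ W →
      secantCount F (↑S) W = 2) :
    ∃ b : Module.Basis (Fin 3) F (Fin 3 → F),
      b 0 = x.rep ∧ b 1 = y.rep ∧ b 2 = z.rep ∧
      (∀ s ∈ S \ {x, y, z}, b.repr s.rep 1 ≠ 0 ∧ b.repr s.rep 2 ≠ 0) ∧
      ∏ s ∈ S \ {x, y, z}, (-(b.repr s.rep 1) / b.repr s.rep 2) = -1 := by
  have indep {p q : Pt F} (hp : p ∈ S) (hq : q ∈ S) (hxp : x ≠ p) (hxq : x ≠ q)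
      (hpq : p ≠ q) : LinearIndependent F ![x.rep, p.rep, q.rep] :=
    linearIndependent_rep_of_secantCount_le_two S.finite_toSet
      (fun W hW hxW => (hbisec W hW hxW).le) hx hp hq hxp hxq hpq
  let b := basisOfLinearIndependentOfCardEqFinrank (indep hy hz hxy hxz hyz) (by simp)
  have hb : ⇑b = ![x.rep, y.rep, z.rep] := coe_basisOfLinearIndependentOfCardEqFinrank _ _
  have mem {s : Pt F} (hs : s ∈ S \ {x, y, z}) : s ∈ S ∧ x ≠ s ∧ y ≠ s ∧ z ≠ s := by
    simp only [Finset.mem_sdiff, Finset.mem_insert, Finset.mem_singleton] at hs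
    exact ⟨hs.1, by tauto, by tauto, by tauto⟩
  have hb2 : ∀ s ∈ S \ {x, y, z}, LinearIndependent F ![b 0, b 2, s.rep] := fun s hs => by
    obtain ⟨hs, hxs, -, hzs⟩ := mem hs
    simpa [hb] using indep hz hs hxz hxs hzs
  have hb1 : ∀ s ∈ S \ {x, y, z}, LinearIndependent F ![b 0, b 1, s.rep] := fun s hs => by
    obtain ⟨hs, hxs, hys, -⟩ := mem hs
    simpa [hb] using indep hy hs hxy hxs hys
  have hcard : (S \ {x, y, z}).card + 1 = Fintype.card F := by
    rw [Finset.card_sdiff_of_subset (by simp [Finset.insert_subset_iff, hx, hy, hz]),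
      Finset.card_eq_three.2 ⟨x, y, z, hxy, hxz, hyz, rfl⟩, hS]
    have : 0 < Fintype.card F := Fintype.card_pos
    omega
  refine ⟨b, by simp [hb], by simp [hb], by simp [hb], fun s hs =>
    ⟨b.repr_one_ne_zero_of_linearIndependent (hb2 s hs),
      b.repr_two_ne_zero_of_linearIndependent (hb1 s hs)⟩,
    b.prod_neg_div_repr_eq_neg_one hcard hb2 hb1 fun s hs t ht hst => ?_⟩
  simpa [hb] using indep (mem hs).1 (mem ht).1 (mem hs).2.1 (mem ht).2.1 hst
end

section
/- Under the setup described in the context, for all pairwise distinct x, y, z ∈ S'∖{e}, b_{xy}(z) ≠ 0. -/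
/-!
Fix `a ∈ S_{4/3}` and `b, c ∈ S` with `ab`, `ac` bisecants, and let `α`, `β` be linear forms
cutting out `ab` and `ac`. The other lines through `a` are the kernels of `α - m β`, `m ≠ 0`, and
`s ∈ S \ {a, b, c}` lies on the one with `m = α(s)/β(s)`. The tangent is the only 1-secant
through `a`, so every other line through `a` meets the `q - 1` points of `S \ {a, b, c}`; hence
the 3-secant carries two of them and every line other than the tangent and the 3-secant exactly
one. With Wilson's theorem, `∏ α(s)/β(s) = -v/u` where `u`, `v` are the slopes of the tangent and
of the 3-secant, which only involves the tangent and 3-secant forms at `a` evaluated at `b`, `c`.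
Multiplying these identities at the three vertices of a triangle of points of `S'` cancels the
side forms (Segre's lemma of tangents). For the triangle `x y e` the normalisation at `e` gives
`g_x(y) f_y(x) = -f_x(y) g_y(x)`; for the triangle `x y z`, `b_{xy}(z) = 0` would then force
`g_z(x) f_z(y) = g_z(y) f_z(x)`, so that `f_z(y) g_z - g_z(y) f_z` vanishes at `x`, `y` and `z`,
putting `z` on the bisecant `xy`.
-/

open Projectivization

namespace Projectivization

variable {K V : Type*} [Field K] [AddCommGroup V] [Module K V]

lemma submodule_le_iff_rep_mem_s8 (p : Projectivization K V) (W : Submodule K V) :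
    p.submodule ≤ W ↔ p.rep ∈ W := by
  rw [p.submodule_eq, Submodule.span_singleton_le_iff_mem]

lemma submodule_sup_submodule (p q : Projectivization K V) :
    p.submodule ⊔ q.submodule = Submodule.span K {p.rep, q.rep} := by
  rw [p.submodule_eq, q.submodule_eq, ← Submodule.span_union, Set.singleton_union]

lemma finrank_submodule_sup {p q : Projectivization K V} (h : p ≠ q) :
    Module.finrank K ↥(p.submodule ⊔ q.submodule) = 2 := by
  rw [submodule_sup_submodule, ← Matrix.range_cons_cons_empty _ _ ![],
    finrank_span_eq_card (linearIndependent_pair_iff_ne.2 h)]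
  simp

lemma exists_apply_eq_zero_of_not_le_sup {a b c : Projectivization K V}
    (h : ¬ c.submodule ≤ a.submodule ⊔ b.submodule) :
    ∃ l : V →ₗ[K] K, l a.rep = 0 ∧ l b.rep = 0 ∧ l c.rep ≠ 0 := by
  rw [submodule_le_iff_rep_mem_s8] at h
  obtain ⟨l, hlc, hle⟩ := Submodule.exists_le_ker_of_notMem h
  rw [sup_le_iff, submodule_le_iff_rep_mem_s8, submodule_le_iff_rep_mem_s8] at hle
  exact ⟨l, hle.1, hle.2, hlc⟩

end Projectivization

variable {F : Type} [Field F]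

lemma IsLine.ker {φ : (Fin 3 → F) →ₗ[F] F} (hφ : φ ≠ 0) : IsLine F (LinearMap.ker φ) := by
  have := Module.Dual.finrank_ker_add_one_of_ne_zero hφ
  simp only [Module.finrank_fin_fun] at this
  unfold IsLine
  omega

lemma ker_eq_submodule_sup {φ : (Fin 3 → F) →ₗ[F] F} (hφ : φ ≠ 0) {p q : Pt F}
    (hp : φ p.rep = 0) (hq : φ q.rep = 0) (hpq : p ≠ q) :
    LinearMap.ker φ = p.submodule ⊔ q.submodule := by
  refine (Submodule.eq_of_le_of_finrank_le ?_ ?_).symm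
  · rw [sup_le_iff, submodule_le_iff_rep_mem_s8, submodule_le_iff_rep_mem_s8]
    exact ⟨hp, hq⟩
  · rw [IsLine.ker hφ, finrank_submodule_sup hpq]

lemma not_le_sup_of_secantCount_eq_two {S : Set (Pt F)} (hS : S.Finite) {a b c : Pt F}
    (ha : a ∈ S) (hb : b ∈ S) (hc : c ∈ S) (hab : a ≠ b) (hac : a ≠ c) (hbc : b ≠ c)
    (h2 : secantCount F S (a.submodule ⊔ b.submodule) = 2) :
    ¬ c.submodule ≤ a.submodule ⊔ b.submodule := by
  intro hle
  have hsub : {a, b, c} ⊆ {p ∈ S | p.submodule ≤ a.submodule ⊔ b.submodule} := by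
    rintro p (rfl | rfl | rfl)
    exacts [⟨ha, le_sup_left⟩, ⟨hb, le_sup_right⟩, ⟨hc, hle⟩]
  have := Set.ncard_le_ncard hsub (hS.subset (Set.sep_subset _ _))
  rw [Set.ncard_eq_three.2 ⟨a, b, c, hab, hac, hbc, rfl⟩] at this
  unfold secantCount at h2
  omega

namespace FiniteField

variable {K : Type*} [Field K] [Fintype K] [DecidableEq K]

lemma prod_univ_erase_zero_eq_neg_one : ∏ m ∈ Finset.univ.erase (0 : K), m = -1 := by
  have := congrArg Units.val (prod_univ_units_id_eq_neg_one (K := K))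
  rw [Units.coe_prod, Units.val_neg, Units.val_one] at this
  rw [← this]
  refine Finset.prod_nbij' (fun m => if h : m = 0 then 1 else Units.mk0 m h) (fun u => u)
    ?_ ?_ ?_ ?_ ?_ <;> simp +contextual

lemma prod_pow_eq_neg_div {n : K → ℕ} {u v : K} (hu : u ≠ 0) (hv : v ≠ 0) (huv : u ≠ v)
    (hnu : n u = 0) (hnv : n v = 2) (hn : ∀ m, m ≠ 0 → m ≠ u → m ≠ v → 1 ≤ n m)
    (hsum : ∑ m ∈ Finset.univ.erase 0, n m = Fintype.card K - 1) :
    ∏ m ∈ Finset.univ.erase 0, m ^ n m = -v / u := by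
  set M := Finset.univ.erase (0 : K)
  have huM : u ∈ M := by simpa [M]
  have hvM : v ∈ M.erase u := by simp [M, hv, huv.symm]
  have hmem : ∀ m ∈ (M.erase u).erase v, m ≠ 0 ∧ m ≠ u ∧ m ≠ v := by
    simp +contextual [M]
  have hcard : ((M.erase u).erase v).card = Fintype.card K - 1 - 1 - 1 := by
    rw [Finset.card_erase_of_mem hvM, Finset.card_erase_of_mem huM,
      Finset.card_erase_of_mem (Finset.mem_univ _), Finset.card_univ]
  have hone : ∀ m ∈ (M.erase u).erase v, n m = 1 := by
    rw [← Finset.add_sum_erase M n huM, ← Finset.add_sum_erase _ n hvM, hnu, hnv] at hsum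
    have hle : ∀ m ∈ (M.erase u).erase v, 1 ≤ n m := fun m hm =>
      hn m (hmem m hm).1 (hmem m hm).2.1 (hmem m hm).2.2
    have heq : ∑ m ∈ (M.erase u).erase v, 1 = ∑ m ∈ (M.erase u).erase v, n m := by
      rw [Finset.sum_const, smul_eq_mul, mul_one]; omega
    exact fun m hm => ((Finset.sum_eq_sum_iff_of_le hle).1 heq m hm).symm
  have hwilson : ∏ m ∈ M, m = -1 := prod_univ_erase_zero_eq_neg_one
  rw [← Finset.mul_prod_erase M (fun m => m) huM,
    ← Finset.mul_prod_erase _ (fun m => m) hvM] at hwilson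
  rw [← Finset.mul_prod_erase M _ huM, ← Finset.mul_prod_erase _ _ hvM, hnu, hnv,
    Finset.prod_congr rfl (fun m hm => by rw [hone m hm, pow_one])]
  field_simp
  linear_combination hwilson

end FiniteField

lemma Finset.prod_div_mul_prod_div_mul_prod_div {ι K : Type*} [Field K] (s : Finset ι)
    {x y z : ι → K} (h : ∀ i ∈ s, x i ≠ 0 ∧ y i ≠ 0 ∧ z i ≠ 0) :
    (∏ i ∈ s, x i / y i) * (∏ i ∈ s, z i / x i) * (∏ i ∈ s, y i / z i) = 1 := by
  rw [← Finset.prod_mul_distrib, ← Finset.prod_mul_distrib]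
  refine Finset.prod_eq_one fun i hi => ?_
  obtain ⟨hx, hy, hz⟩ := h i hi
  field_simp

lemma one_le_secantCount {S : Set (Pt F)} (hS : S.Finite) {a : Pt F} (ha : a ∈ S)
    {W : Submodule F (Fin 3 → F)} (haW : a.submodule ≤ W) : 1 ≤ secantCount F S W :=
  (Set.ncard_pos (hS.subset (Set.sep_subset _ _))).2 ⟨a, ha, haW⟩

def IsSecantForm (S : Set (Pt F)) (a : Pt F) (k : ℕ) (φ : (Fin 3 → F) →ₗ[F] F) : Prop :=
  φ ≠ 0 ∧ a.submodule ≤ LinearMap.ker φ ∧ secantCount F S (LinearMap.ker φ) = k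

namespace IsSecantForm

variable {S : Set (Pt F)} {a b : Pt F} {k : ℕ} {φ : (Fin 3 → F) →ₗ[F] F}

lemma apply_rep (hφ : IsSecantForm S a k φ) : φ a.rep = 0 :=
  (submodule_le_iff_rep_mem_s8 a _).1 hφ.2.1

lemma apply_rep_ne_zero (hφ : IsSecantForm S a k φ) (hk : k ≠ 2) (hab : a ≠ b)
    (h2 : secantCount F S (a.submodule ⊔ b.submodule) = 2) : φ b.rep ≠ 0 := by
  intro hb
  rw [← ker_eq_submodule_sup hφ.1 hφ.apply_rep hb hab, hφ.2.2] at h2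
  exact hk h2

lemma two_le_secantCount [Fintype F] (hφ : IsSecantForm S a 1 φ) (hS : S.Finite)
    (ha : a ∈ S43 F S) {W : Submodule F (Fin 3 → F)} (hW : IsLine F W) (haW : a.submodule ≤ W)
    (hWφ : W ≠ LinearMap.ker φ) : 2 ≤ secantCount F S W := by
  have h1 : 1 ≤ secantCount F S W := one_le_secantCount hS ha.1 haW
  have hne1 : secantCount F S W ≠ 1 := by
    intro hW1
    obtain ⟨U, hU⟩ := Set.ncard_eq_one.1 ha.2.1
    have hWU : W ∈ ({U} : Set _) := hU ▸ ⟨hW, haW, hW1⟩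
    have hφU : LinearMap.ker φ ∈ ({U} : Set _) := hU ▸ ⟨IsLine.ker hφ.1, hφ.2.1, hφ.2.2⟩
    exact hWφ (hWU.trans hφU.symm)
  omega

end IsSecantForm

lemma apply_rep_ne_zero_of_secantCount_eq_two {S : Set (Pt F)} (hS : S.Finite)
    {a b s : Pt F} (ha : a ∈ S) (hb : b ∈ S) (hs : s ∈ S) (hsa : s ≠ a) (hsb : s ≠ b)
    (hab : a ≠ b) (h2 : secantCount F S (a.submodule ⊔ b.submodule) = 2)
    {α : (Fin 3 → F) →ₗ[F] F} (hα : α ≠ 0) (hαa : α a.rep = 0) (hαb : α b.rep = 0) :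
    α s.rep ≠ 0 := by
  intro hαs
  refine not_le_sup_of_secantCount_eq_two hS ha hb hs hab hsa.symm hsb.symm h2 ?_
  rw [← ker_eq_submodule_sup hα hαa hαb hab, submodule_le_iff_rep_mem_s8]
  exact hαs

/-- `α` and `β` cut out the sides `ab` and `ac` of the triangle `abc`. -/
structure SideForms (a b c : Pt F) (α β : (Fin 3 → F) →ₗ[F] F) : Prop where
  α_a : α a.rep = 0
  α_b : α b.rep = 0
  α_c : α c.rep ≠ 0
  β_a : β a.rep = 0
  β_c : β c.rep = 0
  β_b : β b.rep ≠ 0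

namespace SideForms

variable {a b c : Pt F} {α β : (Fin 3 → F) →ₗ[F] F}

lemma ne_ab (h : SideForms a b c α β) : a ≠ b := fun e => h.β_b (e ▸ h.β_a)

lemma ne_ac (h : SideForms a b c α β) : a ≠ c := fun e => h.α_c (e ▸ h.α_a)

lemma ne_bc (h : SideForms a b c α β) : b ≠ c := fun e => h.α_c (e ▸ h.α_b)

lemma α_ne_zero (h : SideForms a b c α β) : α ≠ 0 := fun e => h.α_c (by simp [e])

lemma β_ne_zero (h : SideForms a b c α β) : β ≠ 0 := fun e => h.β_b (by simp [e])

lemma sub_smul_ne_zero (h : SideForms a b c α β) (m : F) : α - m • β ≠ 0 :=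
  fun e => h.α_c (by simpa [h.β_c] using congrArg (fun φ => φ c.rep) e)

lemma linearIndependent (h : SideForms a b c α β) :
    LinearIndependent F ![a.rep, b.rep, c.rep] := by
  rw [Fintype.linearIndependent_iff]
  intro g hg
  simp only [Fin.sum_univ_three, Matrix.cons_val_zero, Matrix.cons_val_one,
    Matrix.cons_val_two, Matrix.tail_cons, Matrix.head_cons] at hg
  have hα := congrArg α hg
  have hβ := congrArg β hg
  simp only [map_add, map_smul, smul_eq_mul, h.α_a, h.α_b, h.β_a, h.β_c, mul_zero, zero_add,
    add_zero, map_zero, mul_eq_zero, h.α_c, h.β_b, or_false] at hα hβ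
  rw [hα, hβ, zero_smul, zero_smul, add_zero, add_zero, smul_eq_zero] at hg
  have h0 := hg.resolve_right a.rep_nonzero
  intro i
  fin_cases i <;> assumption

lemma ker_eq_ker_sub_smul (h : SideForms a b c α β) {χ : (Fin 3 → F) →ₗ[F] F}
    (hχa : χ a.rep = 0) (hχc : χ c.rep ≠ 0) :
    LinearMap.ker χ = LinearMap.ker (α - (-(χ b.rep * α c.rep) / (χ c.rep * β b.rep)) • β) := by
  have hspan : Submodule.span F (Set.range ![a.rep, b.rep, c.rep]) = ⊤ :=
    h.linearIndependent.span_eq_top_of_card_eq_finrank (by simp)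
  have hχ : χ = (χ c.rep / α c.rep) • (α - (-(χ b.rep * α c.rep) / (χ c.rep * β b.rep)) • β) := by
    refine LinearMap.ext_on_range hspan fun i => ?_
    have := h.α_c
    have := h.β_b
    fin_cases i <;> simp [hχa, h.α_a, h.α_b, h.β_a, h.β_c] <;> field_simp
  conv_lhs => rw [hχ]
  exact LinearMap.ker_smul _ _ (div_ne_zero hχc h.α_c)

lemma sub_smul_injective (h : SideForms a b c α β) {m m' : F}
    (hmm' : LinearMap.ker (α - m • β) = LinearMap.ker (α - m' • β)) : m = m' := by
  have hc : (α - m • β) c.rep = (α - m' • β) c.rep := by simp [h.β_c]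
  have heq := Module.Dual.eq_of_ker_eq_of_apply_eq c.rep hmm' hc (by simpa [h.β_c] using h.α_c)
  have hb := congrArg (fun φ => φ b.rep) heq
  simpa [h.α_b, h.β_b] using hb

end SideForms

lemma exists_sideForms_of_not_collinear {p₁ p₂ p₃ : Pt F}
    (h₃ : ¬ p₃.submodule ≤ p₁.submodule ⊔ p₂.submodule)
    (h₂ : ¬ p₂.submodule ≤ p₁.submodule ⊔ p₃.submodule)
    (h₁ : ¬ p₁.submodule ≤ p₂.submodule ⊔ p₃.submodule) :
    ∃ l₁₂ l₁₃ l₂₃ : (Fin 3 → F) →ₗ[F] F, SideForms p₁ p₂ p₃ l₁₂ l₁₃ ∧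
      SideForms p₂ p₃ p₁ l₂₃ l₁₂ ∧ SideForms p₃ p₁ p₂ l₁₃ l₂₃ := by
  obtain ⟨l₁₂, h₁₂⟩ := exists_apply_eq_zero_of_not_le_sup h₃
  obtain ⟨l₁₃, h₁₃⟩ := exists_apply_eq_zero_of_not_le_sup h₂
  obtain ⟨l₂₃, h₂₃⟩ := exists_apply_eq_zero_of_not_le_sup h₁
  exact ⟨l₁₂, l₁₃, l₂₃, ⟨h₁₂.1, h₁₂.2.1, h₁₂.2.2, h₁₃.1, h₁₃.2.1, h₁₃.2.2⟩,
    ⟨h₂₃.1, h₂₃.2.1, h₂₃.2.2, h₁₂.2.1, h₁₂.1, h₁₂.2.2⟩,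
    ⟨h₁₃.2.1, h₁₃.1, h₁₃.2.2, h₂₃.2.1, h₂₃.1, h₂₃.2.2⟩⟩

section Pencil

variable [DecidableEq (Pt F)] {S : Set (Pt F)} {a b c : Pt F}
  {α β : (Fin 3 → F) →ₗ[F] F}

lemma card_filter_div_eq [DecidableEq F] (hS : S.Finite) (ha : a ∈ S) (hc : c ∈ S)
    (hac : secantCount F S (a.submodule ⊔ c.submodule) = 2)
    (h : SideForms a b c α β) {m : F} (hm : m ≠ 0) :
    ((hS.toFinset \ {a, b, c}).filter (fun s => α s.rep / β s.rep = m)).card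
      = secantCount F S (LinearMap.ker (α - m • β)) - 1 := by
  have hβs : ∀ s ∈ S, s ≠ a → s ≠ c → β s.rep ≠ 0 := fun s hs hsa hsc =>
    apply_rep_ne_zero_of_secantCount_eq_two hS ha hc hs hsa hsc h.ne_ac hac h.β_ne_zero
      h.β_a h.β_c
  have hset : (((hS.toFinset \ {a, b, c}).filter (fun s => α s.rep / β s.rep = m) :
      Finset (Pt F)) : Set (Pt F))
        = {p ∈ S | p.submodule ≤ LinearMap.ker (α - m • β)} \ {a} := by
    ext p
    simp only [Finset.coe_filter, Finset.mem_sdiff, Set.Finite.mem_toFinset,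
      Finset.mem_insert, Finset.mem_singleton, not_or, Set.mem_sdiff, Set.mem_ofPred_eq,
      Set.mem_singleton_iff, submodule_le_iff_rep_mem_s8, LinearMap.mem_ker,
      LinearMap.sub_apply, LinearMap.smul_apply, smul_eq_mul, sub_eq_zero]
    constructor
    · rintro ⟨⟨hpS, hpa, -, hpc⟩, hr⟩
      exact ⟨⟨hpS, by rw [← hr, div_mul_cancel₀ _ (hβs p hpS hpa hpc)]⟩, hpa⟩
    · rintro ⟨⟨hpS, hp⟩, hpa⟩
      have hpb : p ≠ b := by
        rintro rfl
        simp [h.α_b, hm, h.β_b, eq_comm (a := (0 : F))] at hp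
      have hpc : p ≠ c := by
        rintro rfl
        simp [h.β_c, h.α_c] at hp
      exact ⟨⟨hpS, hpa, hpb, hpc⟩, by rw [hp, mul_div_cancel_right₀ _ (hβs p hpS hpa hpc)]⟩
  have haL : a ∈ {p ∈ S | p.submodule ≤ LinearMap.ker (α - m • β)} :=
    ⟨ha, by simp [submodule_le_iff_rep_mem_s8, h.α_a, h.β_a]⟩
  rw [← Set.ncard_coe_finset, hset, Set.ncard_sdiff_singleton_of_mem haL]
  rfl

lemma SideForms.apply_ne_zero (hS : S.Finite) (ha : a ∈ S) (hb : b ∈ S) (hc : c ∈ S)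
    (hab : secantCount F S (a.submodule ⊔ b.submodule) = 2)
    (hac : secantCount F S (a.submodule ⊔ c.submodule) = 2)
    (h : SideForms a b c α β) {s : Pt F} (hs : s ∈ hS.toFinset \ {a, b, c}) :
    α s.rep ≠ 0 ∧ β s.rep ≠ 0 := by
  simp only [Finset.mem_sdiff, Set.Finite.mem_toFinset, Finset.mem_insert,
    Finset.mem_singleton, not_or] at hs
  obtain ⟨hsS, hsa, hsb, hsc⟩ := hs
  exact ⟨apply_rep_ne_zero_of_secantCount_eq_two hS ha hb hsS hsa hsb h.ne_ab hab h.α_ne_zero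
      h.α_a h.α_b,
    apply_rep_ne_zero_of_secantCount_eq_two hS ha hc hsS hsa hsc h.ne_ac hac h.β_ne_zero
      h.β_a h.β_c⟩

lemma prod_div_eq_neg_div [Fintype F] [DecidableEq F] (hS : S.Finite)
    (hcard : S.ncard = Fintype.card F + 2)
    (ha : a ∈ S43 F S) (hb : b ∈ S) (hc : c ∈ S)
    (hab : secantCount F S (a.submodule ⊔ b.submodule) = 2)
    (hac : secantCount F S (a.submodule ⊔ c.submodule) = 2)
    (h : SideForms a b c α β) {φ ψ : (Fin 3 → F) →ₗ[F] F}
    (hφ : IsSecantForm S a 1 φ) (hψ : IsSecantForm S a 3 ψ) {u v : F} (hu0 : u ≠ 0)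
    (hv0 : v ≠ 0) (hu : LinearMap.ker φ = LinearMap.ker (α - u • β))
    (hv : LinearMap.ker ψ = LinearMap.ker (α - v • β)) :
    ∏ s ∈ hS.toFinset \ {a, b, c}, α s.rep / β s.rep = -v / u := by
  set T := hS.toFinset \ {a, b, c}
  set n : F → ℕ := fun m => (T.filter (fun s => α s.rep / β s.rep = m)).card
  have hn : ∀ m ≠ 0, n m = secantCount F S (LinearMap.ker (α - m • β)) - 1 :=
    fun m hm => card_filter_div_eq hS ha.1 hc hac h hm
  have huv : u ≠ v := by
    intro e
    have := hφ.2.2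
    rw [hu, e, ← hv, hψ.2.2] at this
    norm_num at this
  have hmaps : ∀ s ∈ T, α s.rep / β s.rep ∈ Finset.univ.erase 0 := fun s hs =>
    Finset.mem_erase.2 ⟨div_ne_zero (h.apply_ne_zero hS ha.1 hb hc hab hac hs).1
      (h.apply_ne_zero hS ha.1 hb hc hab hac hs).2, Finset.mem_univ _⟩
  have hprod : ∏ s ∈ T, α s.rep / β s.rep = ∏ m ∈ Finset.univ.erase 0, m ^ n m := by
    rw [← Finset.prod_fiberwise_of_maps_to hmaps]
    refine Finset.prod_congr rfl fun m _ => ?_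
    rw [Finset.prod_congr rfl fun s hs => (Finset.mem_filter.1 hs).2, Finset.prod_const]
  have hsum : ∑ m ∈ Finset.univ.erase 0, n m = Fintype.card F - 1 := by
    have habc : {a, b, c} ⊆ hS.toFinset := by simp [Set.insert_subset_iff, ha.1, hb, hc]
    rw [← Finset.card_eq_sum_card_fiberwise hmaps, Finset.card_sdiff_of_subset habc,
      ← Set.ncard_eq_toFinset_card S hS, hcard,
      Finset.card_eq_three.2 ⟨a, b, c, h.ne_ab, h.ne_ac, h.ne_bc, rfl⟩]
    omega
  have hge : ∀ m ≠ 0, m ≠ u → m ≠ v → 1 ≤ n m := by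
    intro m hm hmu _
    have := hφ.two_le_secantCount hS ha (IsLine.ker (h.sub_smul_ne_zero m))
      (by simp [submodule_le_iff_rep_mem_s8, h.α_a, h.β_a])
      (fun e => hmu (h.sub_smul_injective (e.trans hu)))
    rw [hn m hm]
    omega
  rw [hprod]
  exact FiniteField.prod_pow_eq_neg_div hu0 hv0 huv (by rw [hn u hu0, ← hu, hφ.2.2])
    (by rw [hn v hv0, ← hv, hψ.2.2]) hge hsum

theorem prod_div_mul_eq [Fintype F] [DecidableEq F] (hS : S.Finite)
    (hcard : S.ncard = Fintype.card F + 2)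
    (ha : a ∈ S43 F S) (hb : b ∈ S) (hc : c ∈ S)
    (hab : secantCount F S (a.submodule ⊔ b.submodule) = 2)
    (hac : secantCount F S (a.submodule ⊔ c.submodule) = 2)
    (h : SideForms a b c α β) {φ ψ : (Fin 3 → F) →ₗ[F] F}
    (hφ : IsSecantForm S a 1 φ) (hψ : IsSecantForm S a 3 ψ) :
    (∏ s ∈ hS.toFinset \ {a, b, c}, α s.rep / β s.rep) * (ψ c.rep * φ b.rep)
      = -(ψ b.rep * φ c.rep) := by
  have hφb := hφ.apply_rep_ne_zero (by norm_num) h.ne_ab hab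
  have hφc := hφ.apply_rep_ne_zero (by norm_num) h.ne_ac hac
  have hψb := hψ.apply_rep_ne_zero (by norm_num) h.ne_ab hab
  have hψc := hψ.apply_rep_ne_zero (by norm_num) h.ne_ac hac
  have hαc := h.α_c
  have hβb := h.β_b
  rw [prod_div_eq_neg_div hS hcard ha hb hc hab hac h hφ hψ (by simp [*]) (by simp [*])
    (h.ker_eq_ker_sub_smul hφ.apply_rep hφc) (h.ker_eq_ker_sub_smul hψ.apply_rep hψc)]
  field_simp

end Pencil

lemma apply_mul_apply_ne_apply_mul_apply {S : Set (Pt F)} (hS : S.Finite) {x y z : Pt F}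
    (hx : x ∈ S) (hy : y ∈ S) (hz : z ∈ S) (hxy : x ≠ y) (hxz : x ≠ z) (hyz : y ≠ z)
    (hzy : secantCount F S (z.submodule ⊔ y.submodule) = 2) {k l : ℕ}
    {φ ψ : (Fin 3 → F) →ₗ[F] F} (hφ : IsSecantForm S z k φ) (hψ : IsSecantForm S z l ψ)
    (hk : k ≠ 2) (hl : l ≠ 2) (hkl : k ≠ l) :
    ψ x.rep * φ y.rep ≠ ψ y.rep * φ x.rep := by
  intro hxy'
  have hφy := hφ.apply_rep_ne_zero hk hyz.symm hzy
  have hψy := hψ.apply_rep_ne_zero hl hyz.symm hzy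
  set χ := φ y.rep • ψ - ψ y.rep • φ
  have hχ : χ ≠ 0 := by
    intro h0
    have hker : LinearMap.ker ψ = LinearMap.ker φ := by
      rw [← LinearMap.ker_smul ψ _ hφy, ← LinearMap.ker_smul φ _ hψy, sub_eq_zero.1 h0]
    exact hkl (hφ.2.2.symm.trans (hker ▸ hψ.2.2))
  have hline := ker_eq_submodule_sup hχ (by simp [χ, hφ.apply_rep, hψ.apply_rep])
    (by simp [χ, mul_comm]) hyz.symm
  refine not_le_sup_of_secantCount_eq_two hS hz hy hx hyz.symm hxz.symm hxy.symm hzy ?_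
  rw [← hline, submodule_le_iff_rep_mem_s8, LinearMap.mem_ker]
  simp only [χ, LinearMap.sub_apply, LinearMap.smul_apply, smul_eq_mul]
  linear_combination hxy'

section Configuration

variable [Fintype F] {S S' : Set (Pt F)} {f g : Pt F → ((Fin 3 → F) →ₗ[F] F)}

theorem triangle_relation (hS : S.Finite) (hcard : S.ncard = Fintype.card F + 2)
    (hS' : S' ⊆ S43 F S) (hf : ∀ x ∈ S', IsSecantForm S x 1 (f x))
    (hg : ∀ x ∈ S', IsSecantForm S x 3 (g x))
    (hbi : ∀ x ∈ S', ∀ y ∈ S', x ≠ y → secantCount F S (x.submodule ⊔ y.submodule) = 2)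
    {p₁ p₂ p₃ : Pt F} (h₁ : p₁ ∈ S') (h₂ : p₂ ∈ S') (h₃ : p₃ ∈ S')
    (h₁₂ : p₁ ≠ p₂) (h₁₃ : p₁ ≠ p₃) (h₂₃ : p₂ ≠ p₃) :
    g p₁ p₂.rep * f p₁ p₃.rep * (g p₂ p₃.rep * f p₂ p₁.rep) * (g p₃ p₁.rep * f p₃ p₂.rep)
      = -(g p₁ p₃.rep * f p₁ p₂.rep * (g p₂ p₁.rep * f p₂ p₃.rep)
          * (g p₃ p₂.rep * f p₃ p₁.rep)) := by
  classical
  have hS₁ := (hS' h₁).1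
  have hS₂ := (hS' h₂).1
  have hS₃ := (hS' h₃).1
  have s₁₂ := hbi _ h₁ _ h₂ h₁₂
  have s₁₃ := hbi _ h₁ _ h₃ h₁₃
  have s₂₃ := hbi _ h₂ _ h₃ h₂₃
  have s₂₁ := hbi _ h₂ _ h₁ h₁₂.symm
  have s₃₁ := hbi _ h₃ _ h₁ h₁₃.symm
  have s₃₂ := hbi _ h₃ _ h₂ h₂₃.symm
  obtain ⟨l₁₂, l₁₃, l₂₃, sf₁, sf₂, sf₃⟩ := exists_sideForms_of_not_collinear
    (not_le_sup_of_secantCount_eq_two hS hS₁ hS₂ hS₃ h₁₂ h₁₃ h₂₃ s₁₂)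
    (not_le_sup_of_secantCount_eq_two hS hS₁ hS₃ hS₂ h₁₃ h₁₂ h₂₃.symm s₁₃)
    (not_le_sup_of_secantCount_eq_two hS hS₂ hS₃ hS₁ h₂₃ h₁₂.symm h₁₃.symm s₂₃)
  have e₂ : ({p₂, p₃, p₁} : Finset (Pt F)) = {p₁, p₂, p₃} := by ext; simp; tauto
  have e₃ : ({p₃, p₁, p₂} : Finset (Pt F)) = {p₁, p₂, p₃} := by ext; simp; tauto
  have P₁ := prod_div_mul_eq hS hcard (hS' h₁) hS₂ hS₃ s₁₂ s₁₃ sf₁ (hf _ h₁) (hg _ h₁)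
  have P₂ := prod_div_mul_eq hS hcard (hS' h₂) hS₃ hS₁ s₂₃ s₂₁ sf₂ (hf _ h₂) (hg _ h₂)
  have P₃ := prod_div_mul_eq hS hcard (hS' h₃) hS₁ hS₂ s₃₁ s₃₂ sf₃ (hf _ h₃) (hg _ h₃)
  rw [e₂] at P₂
  rw [e₃] at P₃
  have hX := (hS.toFinset \ {p₁, p₂, p₃}).prod_div_mul_prod_div_mul_prod_div fun s hs =>
    ⟨(sf₁.apply_ne_zero hS hS₁ hS₂ hS₃ s₁₂ s₁₃ hs).1,
      (sf₁.apply_ne_zero hS hS₁ hS₂ hS₃ s₁₂ s₁₃ hs).2,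
      (sf₂.apply_ne_zero hS hS₂ hS₃ hS₁ s₂₃ s₂₁ (by rwa [e₂])).1⟩
  have key := congrArg₂ (· * ·) (congrArg₂ (· * ·) P₁ P₂) P₃
  linear_combination key - (g p₁ p₃.rep * f p₁ p₂.rep * (g p₂ p₁.rep * f p₂ p₃.rep)
      * (g p₃ p₂.rep * f p₃ p₁.rep)) * hX

theorem pair_relation (hS : S.Finite) (hcard : S.ncard = Fintype.card F + 2)
    (hS' : S' ⊆ S43 F S) (hf : ∀ x ∈ S', IsSecantForm S x 1 (f x))
    (hg : ∀ x ∈ S', IsSecantForm S x 3 (g x))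
    (hbi : ∀ x ∈ S', ∀ y ∈ S', x ≠ y → secantCount F S (x.submodule ⊔ y.submodule) = 2)
    {e : Pt F} (he : e ∈ S')
    (hscale : ∀ x ∈ S', f x e.rep = f e x.rep ∧ g x e.rep = g e x.rep)
    {u v : Pt F} (hu : u ∈ S') (hv : v ∈ S') (hue : u ≠ e) (hve : v ≠ e) (huv : u ≠ v) :
    g u v.rep * f v u.rep = -(f u v.rep * g v u.rep) := by
  have T := triangle_relation hS hcard hS' hf hg hbi hu hv he huv hue hve
  rw [(hscale u hu).1, (hscale u hu).2, (hscale v hv).1, (hscale v hv).2] at T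
  have heu := hbi e he u hu hue.symm
  have hev := hbi e he v hv hve.symm
  have h₁ := (hf e he).apply_rep_ne_zero (by norm_num) hue.symm heu
  have h₂ := (hg e he).apply_rep_ne_zero (by norm_num) hue.symm heu
  have h₃ := (hf e he).apply_rep_ne_zero (by norm_num) hve.symm hev
  have h₄ := (hg e he).apply_rep_ne_zero (by norm_num) hve.symm hev
  refine mul_right_cancel₀ (mul_ne_zero (mul_ne_zero (mul_ne_zero h₁ h₂) h₃) h₄) ?_
  linear_combination T

end Configuration

theorem b_ne_zero_general
    (F : Type) [Field F] [Fintype F]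
    (S : Set (Pt F)) (hS : S.ncard = Fintype.card F + 2)
    (S' : Set (Pt F)) (hS' : S' ⊆ S43 F S)
    (f g : Pt F → ((Fin 3 → F) →ₗ[F] F))
    (hf : ∀ x ∈ S', f x ≠ 0 ∧ x.submodule ≤ LinearMap.ker (f x) ∧
      secantCount F S (LinearMap.ker (f x)) = 1)
    (hg : ∀ x ∈ S', g x ≠ 0 ∧ x.submodule ≤ LinearMap.ker (g x) ∧
      secantCount F S (LinearMap.ker (g x)) = 3)
    (hbi : ∀ x ∈ S', ∀ y ∈ S', x ≠ y → secantCount F S (x.submodule ⊔ y.submodule) = 2)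
    (e : Pt F) (he : e ∈ S')
    (hscale : ∀ x ∈ S', f x e.rep = f e x.rep ∧ g x e.rep = g e x.rep)
    (x y z : Pt F)
    (hx : x ∈ S' \ {e}) (hy : y ∈ S' \ {e}) (hz : z ∈ S' \ {e})
    (hxy : x ≠ y) (hxz : x ≠ z) (hyz : y ≠ z) :
    f x z.rep * g y z.rep - g x z.rep * f y z.rep ≠ 0 := by
  replace hf : ∀ x ∈ S', IsSecantForm S x 1 (f x) := hf
  replace hg : ∀ x ∈ S', IsSecantForm S x 3 (g x) := hg
  have hSfin : S.Finite := Set.finite_of_ncard_ne_zero (by omega)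
  have hpair := pair_relation hSfin hS hS' hf hg hbi he hscale hx.1 hy.1 hx.2 hy.2 hxy
  have htri := triangle_relation hSfin hS hS' hf hg hbi hx.1 hy.1 hz.1 hxy hxz hyz
  have h₁ := (hf x hx.1).apply_rep_ne_zero (by norm_num) hxy (hbi x hx.1 y hy.1 hxy)
  have h₂ := (hg y hy.1).apply_rep_ne_zero (by norm_num) hxy.symm (hbi y hy.1 x hx.1 hxy.symm)
  have h₃ := (hg x hx.1).apply_rep_ne_zero (by norm_num) hxz (hbi x hx.1 z hz.1 hxz)
  have h₄ := (hf y hy.1).apply_rep_ne_zero (by norm_num) hyz (hbi y hy.1 z hz.1 hyz)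
  intro hb
  refine apply_mul_apply_ne_apply_mul_apply hSfin (hS' hx.1).1 (hS' hy.1).1 (hS' hz.1).1
    hxy hxz hyz (hbi z hz.1 y hy.1 hyz.symm) (hf z hz.1) (hg z hz.1) (by norm_num)
    (by norm_num) (by norm_num) ?_
  refine mul_left_cancel₀ (mul_ne_zero (mul_ne_zero (mul_ne_zero h₁ h₂) h₃) h₄) ?_
  linear_combination -htri + (g z x.rep * f z y.rep * f x z.rep * g y z.rep) * hpair
    - (g z x.rep * f z y.rep * f x y.rep * g y x.rep) * hb

/-- For all pairwise distinct `x, y, z ∈ S' \ {e}`, `b_{xy}(z) ≠ 0`. -/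
theorem b_ne_zero
    (F : Type) [Field F] [Fintype F] (hq : Odd (Fintype.card F))
    (S : Set (Pt F)) (hS : S.ncard = Fintype.card F + 2)
    (S' : Set (Pt F)) (hS' : S' ⊆ S43 F S)
    (f g : Pt F → ((Fin 3 → F) →ₗ[F] F))
    (hf : ∀ x ∈ S', f x ≠ 0 ∧ x.submodule ≤ LinearMap.ker (f x) ∧
      secantCount F S (LinearMap.ker (f x)) = 1)
    (hg : ∀ x ∈ S', g x ≠ 0 ∧ x.submodule ≤ LinearMap.ker (g x) ∧
      secantCount F S (LinearMap.ker (g x)) = 3)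
    (hbi : ∀ x ∈ S', ∀ y ∈ S', x ≠ y → secantCount F S (x.submodule ⊔ y.submodule) = 2)
    (e : Pt F) (he : e ∈ S')
    (hscale : ∀ x ∈ S', f x e.rep = f e x.rep ∧ g x e.rep = g e x.rep)
    (x y z : Pt F)
    (hx : x ∈ S' \ {e}) (hy : y ∈ S' \ {e}) (hz : z ∈ S' \ {e})
    (hxy : x ≠ y) (hxz : x ≠ z) (hyz : y ≠ z) :
    f x z.rep * g y z.rep - g x z.rep * f y z.rep ≠ 0 :=
  b_ne_zero_general F S hS S' hS' f g hf hg hbi e he hscale x y z hx hy hz hxy hxz hyz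
end

section
/- Let q be a prime power and let U be a nonzero finite-dimensional F_q-subspace of the polynomial ring F_q[X_1,X_2,X_3]. Let d be the maximum of the total degrees of the nonzero elements of U. If d ≤ q, then there exist f, g ∈ U such that gcd(f,g) divides every element of U (so gcd(f,g) is a greatest common divisor of the set U). -/
/-!
Let `h` be a gcd of `U` and write a nonzero `f ∈ U` as `f = h * f'`. For each prime factor `π`
of `f'`, the elements of `U` divisible by `h * π` form a proper subspace, since otherwise
`h * π` would divide the gcd `h`. Each prime factor has positive degree, so `f'` has at most
`deg f' ≤ q` of them, and a vector space over `𝔽_q` is not a union of `q` proper subspaces.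
Hence some `g = h * g' ∈ U` avoids all these subspaces; then `f'` and `g'` are coprime, so `h`
is a gcd of `f` and `g`.
-/

open Finset

theorem Submodule.exists_forall_notMem_of_card_le {F M ι : Type*} [Field F] [Fintype F]
    [AddCommGroup M] [Module F M] [Finite M] (s : Finset ι) (W : ι → Submodule F M)
    (hs : #s ≤ Fintype.card F) (hW : ∀ i ∈ s, W i ≠ ⊤) :
    ∃ x, ∀ i ∈ s, x ∉ W i := by
  -- Each `W i` has at most `|M| / q` points, one of them `0`, so together they cover at most
  -- `1 + q * (|M| / q - 1) < |M|` points.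
  classical
  by_contra! hcover
  obtain ⟨i₀, hi₀, -⟩ := hcover 0
  have : Fintype M := Fintype.ofFinite M
  set q := Fintype.card F
  set r := Module.finrank F M
  have hq : 1 < q := Fintype.one_lt_card
  have hr : 0 < r := (Submodule.finrank_lt (hW i₀ hi₀)).trans_le' (Nat.zero_le _)
  have hcard_W : ∀ i ∈ s, Nat.card (W i) ≤ q ^ (r - 1) := fun i hi => by
    rw [Module.natCard_eq_pow_finrank (K := F), Nat.card_eq_fintype_card]
    exact Nat.pow_le_pow_right (by omega) (by have := Submodule.finrank_lt (hW i hi); omega)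
  have hcover_card : Fintype.card M ≤ 1 + ∑ i ∈ s, (Nat.card (W i) - 1) := by
    have hsub : (univ : Finset M) ⊆
        insert 0 (s.biUnion fun i => (W i : Set M).toFinset.erase 0) := by
      intro x _
      obtain ⟨i, hi, hx⟩ := hcover x
      by_cases hx0 : x = 0
      · simp [hx0]
      · exact mem_insert_of_mem (mem_biUnion.mpr ⟨i, hi, by simp [hx0, hx]⟩)
    calc Fintype.card M = #(univ : Finset M) := rfl
      _ ≤ #(insert 0 (s.biUnion fun i => (W i : Set M).toFinset.erase 0)) := card_le_card hsub
      _ ≤ 1 + ∑ i ∈ s, #((W i : Set M).toFinset.erase 0) := by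
          grw [card_insert_le, card_biUnion_le]; omega
      _ = 1 + ∑ i ∈ s, (Nat.card (W i) - 1) := by
          simp [card_erase_of_mem, Nat.card_eq_fintype_card]
  have hM : Fintype.card M = q * q ^ (r - 1) := by
    rw [← pow_succ', Nat.sub_add_cancel hr, Module.card_eq_pow_finrank (K := F)]
  have hpos : 1 ≤ q ^ (r - 1) := Nat.one_le_pow _ _ (by omega)
  have := calc Fintype.card M ≤ 1 + ∑ i ∈ s, (Nat.card (W i) - 1) := hcover_card
    _ ≤ 1 + #s * (q ^ (r - 1) - 1) := by
        grw [sum_le_card_nsmul s _ (q ^ (r - 1) - 1) fun i hi => by have := hcard_W i hi; omega]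
        simp
    _ ≤ 1 + q * (q ^ (r - 1) - 1) := by gcongr
  rw [hM, Nat.mul_sub_one] at this
  have : q ≤ q * q ^ (r - 1) := Nat.le_mul_of_pos_right q hpos
  omega

theorem Submodule.exists_mem_forall_notMem_of_card_le {F M ι : Type*} [Field F] [Fintype F]
    [AddCommGroup M] [Module F M] (U : Submodule F M) [Module.Finite F U] (s : Finset ι)
    (W : ι → Submodule F M) (hs : #s ≤ Fintype.card F) (hW : ∀ i ∈ s, ¬U ≤ W i) :
    ∃ x ∈ U, ∀ i ∈ s, x ∉ W i := by
  have : Finite U := Module.finite_of_finite F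
  obtain ⟨x, hx⟩ := exists_forall_notMem_of_card_le s (fun i => (W i).comap U.subtype) hs
    fun i hi htop => hW i hi fun y hy => by simpa using htop.ge (mem_top (x := ⟨y, hy⟩))
  exact ⟨x, x.2, hx⟩

theorem Submodule.exists_forall_dvd {F A : Type*} [CommSemiring F] [CommRing A] [IsDomain A]
    [NormalizedGCDMonoid A] [Algebra F A] (U : Submodule F A) (hU : U.FG) :
    ∃ h : A, (∀ p ∈ U, h ∣ p) ∧ ∀ e, (∀ p ∈ U, e ∣ p) → e ∣ h := by
  obtain ⟨s, rfl⟩ := hU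
  have hspan : Submodule.span F s ≤ (Ideal.span {s.gcd id}).restrictScalars F :=
    Submodule.span_le.mpr fun b hb => Ideal.mem_span_singleton.mpr (Finset.gcd_dvd hb)
  exact ⟨s.gcd id, fun p hp => Ideal.mem_span_singleton.mp (hspan hp),
    fun e he => Finset.dvd_gcd fun b hb => he b (Submodule.subset_span hb)⟩

theorem IsRelPrime.dvd_of_dvd_mul_left_of_dvd_mul_left {α : Type*} [CommMonoidWithZero α]
    [GCDMonoid α] {a b c e : α} (hab : IsRelPrime a b) (ha : e ∣ c * a) (hb : e ∣ c * b) :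
    e ∣ c :=
  (dvd_gcd ha hb).trans <| (gcd_mul_left' c a b).dvd.trans <|
    (gcd_isUnit_iff_isRelPrime.mpr hab).mul_right_dvd.mpr dvd_rfl

namespace MvPolynomial

variable {σ K : Type*}

theorem totalDegree_multiset_prod_of_isDomain {R : Type*} [CommRing R] [IsDomain R]
    {s : Multiset (MvPolynomial σ R)} (hs : (0 : MvPolynomial σ R) ∉ s) :
    s.prod.totalDegree = (s.map totalDegree).sum := by
  induction s using Multiset.induction_on with
  | empty => simp
  | cons a s ih =>
    rw [Multiset.mem_cons, not_or] at hs
    rw [Multiset.prod_cons, totalDegree_mul_of_isDomain (Ne.symm hs.1)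
      (Multiset.prod_ne_zero hs.2), ih hs.2, Multiset.map_cons, Multiset.sum_cons]

theorem totalDegree_pos_of_not_isUnit [Field K] {p : MvPolynomial σ K} (hp0 : p ≠ 0)
    (hp : ¬IsUnit p) : 0 < p.totalDegree := by
  by_contra! h
  have hC : p = C (p.coeff 0) := totalDegree_eq_zero_iff_eq_C.mp (Nat.le_zero.mp h)
  refine hp (hC ▸ (isUnit_iff_ne_zero.mpr fun h0 => hp0 ?_).map C)
  rw [hC, h0, C_0]

open UniqueFactorizationMonoid in
theorem card_primeFactors_le_totalDegree [Field K] [NormalizationMonoid (MvPolynomial σ K)]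
    {p : MvPolynomial σ K} (hp : p ≠ 0) : #(primeFactors p) ≤ p.totalDegree := by
  classical
  have hprime := prime_of_normalized_factor (a := p)
  calc #(primeFactors p) ≤ Multiset.card (normalizedFactors p) := by
        rw [← toFinset_normalizedFactors]; exact Multiset.toFinset_card_le _
    _ = Multiset.card (normalizedFactors p) • 1 := by rw [smul_eq_mul, mul_one]
    _ ≤ ((normalizedFactors p).map totalDegree).sum := by
        rw [← Multiset.card_map totalDegree]
        refine Multiset.card_nsmul_le_sum fun n hn => ?_
        obtain ⟨a, ha, rfl⟩ := Multiset.mem_map.mp hn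
        exact totalDegree_pos_of_not_isUnit (hprime a ha).ne_zero (hprime a ha).not_isUnit
    _ = (normalizedFactors p).prod.totalDegree :=
        (totalDegree_multiset_prod_of_isDomain fun h0 => (hprime 0 h0).ne_zero rfl).symm
    _ ≤ p.totalDegree := totalDegree_le_of_dvd_of_isDomain (prod_normalizedFactors hp).dvd hp

end MvPolynomial

open MvPolynomial UniqueFactorizationMonoid in
/-- If `U` is a nonzero finite-dimensional subspace of `F_q[X₁,X₂,X₃]` in which every element
has total degree at most `q`, then there are `f, g ∈ U` such that a gcd of `f` and `g`
divides every element of `U`. -/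
theorem gcd_of_subspace (F : Type) [Field F] [Fintype F]
    (U : Submodule F (MvPolynomial (Fin 3) F)) (hU : U ≠ ⊥)
    (hfin : Module.Finite F U)
    (hdeg : ∀ p ∈ U, MvPolynomial.totalDegree p ≤ Fintype.card F) :
    ∃ f ∈ U, ∃ g ∈ U, ∃ d : MvPolynomial (Fin 3) F,
      d ∣ f ∧ d ∣ g ∧ (∀ e : MvPolynomial (Fin 3) F, e ∣ f → e ∣ g → e ∣ d) ∧
      ∀ p ∈ U, d ∣ p := by
  let := UniqueFactorizationMonoid.strongNormalizationMonoid (α := MvPolynomial (Fin 3) F)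
  let := UniqueFactorizationMonoid.toNormalizedGCDMonoid (MvPolynomial (Fin 3) F)
  obtain ⟨h, hdvd, hgcd⟩ := U.exists_forall_dvd (Module.Finite.iff_fg.mp hfin)
  obtain ⟨f, hfU, hf0⟩ := Submodule.exists_mem_ne_zero_of_ne_bot hU
  obtain ⟨f', rfl⟩ := hdvd f hfU
  have hh0 : h ≠ 0 := left_ne_zero_of_mul hf0
  have hf'0 : f' ≠ 0 := right_ne_zero_of_mul hf0
  let W (π : MvPolynomial (Fin 3) F) : Submodule F (MvPolynomial (Fin 3) F) :=
    (Ideal.span {h * π}).restrictScalars F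
  have hW : ∀ π ∈ primeFactors f', ¬U ≤ W π := fun π hπ hle =>
    (prime_of_normalized_factor π (mem_primeFactors.mp hπ)).not_isUnit <| isUnit_of_dvd_one <|
      (mul_dvd_mul_iff_left hh0).mp <| by
        rw [mul_one]; exact hgcd _ fun p hp => Ideal.mem_span_singleton.mp (hle hp)
  have hcard : #(primeFactors f') ≤ Fintype.card F :=
    (card_primeFactors_le_totalDegree hf'0).trans <|
      (totalDegree_le_of_dvd_of_isDomain (dvd_mul_left f' h) hf0).trans (hdeg _ hfU)
  obtain ⟨g, hgU, hg⟩ := U.exists_mem_forall_notMem_of_card_le _ W hcard hW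
  obtain ⟨g', rfl⟩ := hdvd g hgU
  have hcop : IsRelPrime f' g' := (isRelPrime_iff_no_prime_factors hf'0).mpr fun d hdf hdg hd => by
    obtain ⟨π, hπ, hdπ⟩ := exists_mem_normalizedFactors_of_dvd hf'0 hd.irreducible hdf
    exact hg π (mem_primeFactors.mpr hπ)
      (Ideal.mem_span_singleton.mpr (mul_dvd_mul_left h (hdπ.symm.dvd.trans hdg)))
  exact ⟨h * f', hfU, h * g', hgU, h, dvd_mul_right _ _, dvd_mul_right _ _,
    fun e hef heg => hcop.dvd_of_dvd_mul_left_of_dvd_mul_left hef heg, hdvd⟩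
end

section
/- Let q be an odd prime power and S a set of q+2 points of PG(2,q). Let x, y, z be distinct points of S_{4/3} such that each line joining two of x, y, z is a bi-secant of S. Suppose Q is a nondegenerate quadratic form on F_q^3 vanishing at x, y and z such that, for each u ∈ {x,y,z}, the tangent line to S at u equals the polar line {v : B(u,v) = 0} of u with respect to Q, where B is the polar bilinear form of Q. For u ∈ {x,y,z} let g_u be a nonzero linear form whose kernel is the 3-secant to S at u. Then g_x(z)g_y(x)g_z(y) = −g_x(y)g_y(z)g_z(x), and consequently the three 3-secants ker g_x, ker g_y, ker g_z are concurrent: there is a point of PG(2,q) incident with all three. -/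
open Projectivization

/-!
Let `A, B, C` be the coordinate functions of the frame `x, y, z`. The lines through `x` other than
the two sides are the kernels of `B - t • C` with `t ≠ 0`, and a point `p` off the sides lies on
the one with parameter `t = B p / C p`. As the sides are bi-secants and the tangent at `x` is
unique, the `q - 1` points of `S` off the triangle realise every parameter exactly once, except
the tangent's `τ` (never) and the `3`-secant's `σ` (twice); by Wilson's theorem the product of the
`B p / C p` is therefore `-σ / τ`. Its product with the analogous products of `C p / A p` at `y`
and of `A p / B p` at `z` is `1`, and as the polar form is symmetric the tangent parameters cancel,
leaving the identity. The identity says that the matrix `(g_u(v))` is singular, so the three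
`3`-secants are concurrent.
-/

open LinearMap QuadraticMap
open scoped Finset
open scoped LinearAlgebra.Projectivization

theorem Finset.mem_iff_of_coe_eq_sdiff {α : Type*} {S : Set α} {T : Finset α} {u v w : α}
    (hT : (T : Set α) = S \ {u, v, w}) {p : α} :
    p ∈ T ↔ p ∈ S ∧ p ≠ u ∧ p ≠ v ∧ p ≠ w := by
  rw [← Finset.mem_coe, hT]
  simp

theorem Finset.card_add_three_of_coe_eq_sdiff {α : Type*} [Finite α] {S : Set α}
    {T : Finset α} {u v w : α} (hu : u ∈ S) (hv : v ∈ S) (hw : w ∈ S) (huv : u ≠ v)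
    (huw : u ≠ w) (hvw : v ≠ w) (hT : (T : Set α) = S \ {u, v, w}) : #T + 3 = S.ncard := by
  have hsub : {u, v, w} ⊆ S := by simp [Set.insert_subset_iff, hu, hv, hw]
  have h3 : ({u, v, w} : Set α).ncard = 3 := Set.ncard_eq_three.2 ⟨u, v, w, huv, huw, hvw, rfl⟩
  have h3S := Set.ncard_le_ncard hsub
  rw [← Set.ncard_coe_finset, hT, Set.ncard_sdiff hsub]
  omega

theorem Finset.prod_div_mul_prod_div_mul_prod_div_eq_one {ι K : Type*} [Field K]
    {T : Finset ι} {a b c : ι → K} (h : ∀ i ∈ T, a i ≠ 0 ∧ b i ≠ 0 ∧ c i ≠ 0) :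
    (∏ i ∈ T, b i / c i) * (∏ i ∈ T, c i / a i) * (∏ i ∈ T, a i / b i) = 1 := by
  rw [← Finset.prod_mul_distrib, ← Finset.prod_mul_distrib]
  refine Finset.prod_eq_one fun i hi => ?_
  obtain ⟨ha, hb, hc⟩ := h i hi
  field_simp

theorem mul_mul_eq_neg_of_div_mul_div_mul_div_eq_one {K : Type*} [Field K]
    {a b c a' b' c' p q r : K}
    (h : -(a * p) / (a' * q) * (-(b * r) / (b' * p)) * (-(c * q) / (c' * r)) = 1) :
    a * b * c = -(a' * b' * c') := by
  rw [div_mul_div_comm, div_mul_div_comm] at h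
  have hD : a' * q * (b' * p) * (c' * r) ≠ 0 := by
    rintro hD
    rw [hD, div_zero] at h
    exact zero_ne_one h
  rw [div_eq_one_iff_eq hD] at h
  have hpqr : p * q * r ≠ 0 := by
    simp only [mul_ne_zero_iff] at hD ⊢
    tauto
  apply mul_right_cancel₀ hpqr
  linear_combination -h

section FiniteField

open Finset

variable {F : Type*} [Field F] [Fintype F] [DecidableEq F]

theorem FiniteField.prod_univ_erase_zero_s12 : ∏ t ∈ univ.erase (0 : F), t = -1 := by
  have h := congrArg Units.val (FiniteField.prod_univ_units_id_eq_neg_one (K := F))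
  rw [Units.coe_prod, Units.val_neg, Units.val_one] at h
  rw [← h]
  exact prod_bij' (fun t ht => Units.mk0 t (ne_of_mem_erase ht)) (fun u _ => (u : F))
    (by simp) (by simp) (by simp) (by simp) (by simp)

theorem FiniteField.prod_univ_sdiff_zero_pair {τ σ : F} (hτ : τ ≠ 0) (hσ : σ ≠ 0)
    (hτσ : τ ≠ σ) :
    ∏ t ∈ univ \ {0, τ, σ}, t = -1 / (τ * σ) := by
  have hsub : {τ, σ} ⊆ univ.erase (0 : F) := by simp [insert_subset_iff, hτ, hσ]
  rw [eq_div_iff (mul_ne_zero hτ hσ), ← FiniteField.prod_univ_erase_zero_s12, ← prod_sdiff hsub,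
    prod_pair hτσ, erase_sdiff_comm, sdiff_insert]

theorem FiniteField.prod_eq_neg_div_of_card_fiber_eq_two {ι : Type*} {T : Finset ι} {f : ι → F}
    {τ σ : F} (hτ : τ ≠ 0) (hT : #T + 1 = Fintype.card F) (hf0 : ∀ i ∈ T, f i ≠ 0)
    (hfτ : ∀ i ∈ T, f i ≠ τ) (hσ : #{i ∈ T | f i = σ} = 2)
    (hsurj : ∀ t, t ≠ 0 → t ≠ τ → t ≠ σ → ∃ i ∈ T, f i = t) :
    ∏ i ∈ T, f i = -σ / τ := by
  obtain ⟨i, hi⟩ : {i ∈ T | f i = σ}.Nonempty := card_pos.1 (by omega)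
  obtain ⟨hiT, rfl⟩ := mem_filter.1 hi
  have hσ0 := hf0 i hiT
  have hτσ := (hfτ i hiT).symm
  have himage : {j ∈ T | ¬f j = f i}.image f = univ \ {0, τ, f i} := by
    ext t
    simp only [mem_image, mem_filter, mem_sdiff, mem_univ, mem_insert, mem_singleton,
      true_and, not_or]
    constructor
    · rintro ⟨j, ⟨hjT, hj⟩, rfl⟩
      exact ⟨hf0 j hjT, hfτ j hjT, hj⟩
    · rintro ⟨ht0, htτ, htσ⟩
      obtain ⟨j, hjT, rfl⟩ := hsurj t ht0 htτ htσ
      exact ⟨j, ⟨hjT, htσ⟩, rfl⟩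
  have hinj : Set.InjOn f ↑({j ∈ T | ¬f j = f i}) := by
    rw [← card_image_iff, himage, card_sdiff_of_subset (subset_univ _), card_univ,
      card_insert_of_notMem (by simp [hτ.symm, hσ0.symm]), card_pair hτσ]
    have := card_filter_add_card_filter_not (s := T) (fun j => f j = f i)
    omega
  rw [← prod_filter_mul_prod_filter_not T (fun j => f j = f i),
    prod_eq_pow_card (fun j hj => (mem_filter.1 hj).2), hσ, ← prod_image (f := fun t => t) hinj,
    himage, FiniteField.prod_univ_sdiff_zero_pair hτ hσ0 hτσ]
  field_simp

end FiniteField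

theorem Projectivization.submodule_le_iff_rep_mem_s12 {K V : Type*} [DivisionRing K]
    [AddCommGroup V] [Module K V] (p : ℙ K V) (W : Submodule K V) :
    p.submodule ≤ W ↔ p.rep ∈ W := by
  rw [submodule_eq, Submodule.span_singleton_le_iff_mem]

section Polar

variable {K V : Type*} [Field K] [AddCommGroup V] [Module K V] {Q : QuadraticForm K V}

theorem QuadraticMap.polarBilin_ne_zero (hQ : (polarBilin Q).Nondegenerate) {v : V}
    (hv : v ≠ 0) : polarBilin Q v ≠ 0 :=
  fun h => hv (hQ.1 v fun n => by simp [h])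

theorem QuadraticMap.polarBilin_self_eq_zero {v : V} (hv : Q v = 0) : polarBilin Q v v = 0 := by
  simp [polarBilin_apply_apply, polar_self, hv]

end Polar

section Coordinates

variable {K V : Type*} [Field K] [AddCommGroup V] [Module K V]

def IsCoordFun (f : V →ₗ[K] K) (a b c : V) : Prop := f a = 1 ∧ f b = 0 ∧ f c = 0

theorem exists_isCoordFun {u v w : ℙ K V} (h : ¬ u.submodule ≤ v.submodule ⊔ w.submodule) :
    ∃ f : V →ₗ[K] K, IsCoordFun f u.rep v.rep w.rep := by
  rw [submodule_le_iff_rep_mem_s12] at h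
  obtain ⟨f, hfu, hle⟩ := Submodule.exists_le_ker_of_notMem h
  have hker : ∀ p : ℙ K V, p.submodule ≤ v.submodule ⊔ w.submodule → f p.rep = 0 :=
    fun p hp => hle ((submodule_le_iff_rep_mem_s12 _ _).1 hp)
  exact ⟨(f u.rep)⁻¹ • f, by simp [hfu], by simp [hker v le_sup_left],
    by simp [hker w le_sup_right]⟩

theorem exists_le_ker_of_mul_mul_eq_neg {x y z : ℙ K V} {gx gy gz C : V →ₗ[K] K}
    (hC : IsCoordFun C z.rep x.rep y.rep)
    (hx : gx x.rep = 0) (hy : gy y.rep = 0) (hz : gz z.rep = 0)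
    (hxy : gx y.rep ≠ 0) (hyx : gy x.rep ≠ 0)
    (h : gx z.rep * gy x.rep * gz y.rep = -(gx y.rep * gy z.rep * gz x.rep)) :
    ∃ p : ℙ K V, p.submodule ≤ ker gx ∧ p.submodule ≤ ker gy ∧
      p.submodule ≤ ker gz := by
  -- `m` is the cross product of the coordinate rows of `gx` and `gy` in the frame `x, y, z`.
  set m := (gx y.rep * gy z.rep) • x.rep + (gx z.rep * gy x.rep) • y.rep
    - (gx y.rep * gy x.rep) • z.rep
  have hm : m ≠ 0 := by
    intro hm
    have hCm := congr(C $hm)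
    simp only [m, map_add, map_sub, map_smul, smul_eq_mul, hC.1, hC.2.1, hC.2.2,
      map_zero] at hCm
    exact mul_ne_zero hxy hyx (by linear_combination -hCm)
  refine ⟨mk K m hm, ?_, ?_, ?_⟩ <;>
    simp only [submodule_mk, Submodule.span_singleton_le_iff_mem, mem_ker, m, map_add, map_sub,
      map_smul, smul_eq_mul, hx, hy, hz]
  · ring
  · ring
  · linear_combination h

end Coordinates

section Lines

variable {F : Type} [Field F] {S : Set (Pt F)}

theorem isLine_sup {u v : Pt F} (h : u ≠ v) : IsLine F (u.submodule ⊔ v.submodule) := by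
  rw [← independent_pair_iff_ne, independent_iff] at h
  have e : Projectivization.rep ∘ ![u, v] = ![u.rep, v.rep] := by
    ext i : 1; fin_cases i <;> rfl
  rw [e] at h
  rw [IsLine, submodule_eq, submodule_eq, ← Submodule.span_union, Set.singleton_union,
    ← Matrix.range_cons_cons_empty _ _ ![]]
  simpa using finrank_span_eq_card h

theorem isLine_ker {g : (Fin 3 → F) →ₗ[F] F} (hg : g ≠ 0) : IsLine F (ker g) := by
  have := Module.Dual.finrank_ker_add_one_of_ne_zero hg
  rw [Module.finrank_fin_fun] at this
  exact Nat.succ_injective this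

theorem eq_sup_of_isLine {u v : Pt F} {W : Submodule F (Fin 3 → F)} (h : u ≠ v)
    (hW : IsLine F W) (hu : u.submodule ≤ W) (hv : v.submodule ≤ W) :
    W = u.submodule ⊔ v.submodule :=
  (Submodule.eq_of_le_of_finrank_eq (sup_le hu hv) (by rw [hW, isLine_sup h])).symm

theorem ker_eq_sup {g : (Fin 3 → F) →ₗ[F] F} {u v : Pt F} (hg : g ≠ 0) (h : u ≠ v)
    (hu : g u.rep = 0) (hv : g v.rep = 0) : ker g = u.submodule ⊔ v.submodule :=
  eq_sup_of_isLine h (isLine_ker hg) ((submodule_le_iff_rep_mem_s12 _ _).2 hu)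
    ((submodule_le_iff_rep_mem_s12 _ _).2 hv)

theorem apply_ne_zero_of_secantCount_ne {g : (Fin 3 → F) →ₗ[F] F} {u v : Pt F}
    (hg : g ≠ 0) (h : u ≠ v) (hu : g u.rep = 0)
    (hne : secantCount F S (ker g) ≠ secantCount F S (u.submodule ⊔ v.submodule)) :
    g v.rep ≠ 0 :=
  fun hv => hne (by rw [ker_eq_sup hg h hu hv])

theorem eq_of_secantCount_eq_one {W : Submodule F (Fin 3 → F)} {u p : Pt F}
    (h1 : secantCount F S W = 1) (hu : u ∈ S) (huW : u.submodule ≤ W)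
    (hp : p ∈ S) (hpW : p.submodule ≤ W) : p = u := by
  obtain ⟨a, ha⟩ := Set.ncard_eq_one.1 h1
  have hu' : u ∈ {p ∈ S | p.submodule ≤ W} := ⟨hu, huW⟩
  have hp' : p ∈ {p ∈ S | p.submodule ≤ W} := ⟨hp, hpW⟩
  rw [ha] at hu' hp'
  exact hp'.trans hu'.symm

theorem secantCount_eq_one_of_unique_tangent {u : Pt F} {L : Submodule F (Fin 3 → F)}
    (h1 : linesThroughWithCount F S u 1 = 1)
    (htan : ∀ W, IsLine F W → u.submodule ≤ W → secantCount F S W = 1 → W = L) :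
    secantCount F S L = 1 := by
  obtain ⟨W, hW⟩ := Set.ncard_eq_one.1 h1
  obtain ⟨hWline, huW, hW1⟩ :
      W ∈ {W | IsLine F W ∧ u.submodule ≤ W ∧ secantCount F S W = 1} := hW ▸ rfl
  rwa [← htan W hWline huW hW1]

end Lines

section Pencil

variable {F : Type} [Field F] {u v w : Pt F} {B C : (Fin 3 → F) →ₗ[F] F}

theorem apply_eq_of_isCoordFun (hB : IsCoordFun B v.rep w.rep u.rep)
    (hC : IsCoordFun C w.rep u.rep v.rep) {h : (Fin 3 → F) →ₗ[F] F} (hu : h u.rep = 0)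
    (m : Fin 3 → F) : h m = B m * h v.rep + C m * h w.rep := by
  set k := h - h v.rep • B - h w.rep • C
  suffices k = 0 by
    have := congr($this m)
    simp only [k, LinearMap.sub_apply, LinearMap.smul_apply, smul_eq_mul,
      LinearMap.zero_apply] at this
    linear_combination this
  by_contra hk
  have hvw : v ≠ w := by rintro rfl; exact one_ne_zero (hB.1.symm.trans hB.2.1)
  have hmem : u.rep ∈ v.submodule ⊔ w.submodule := by
    rw [← ker_eq_sup hk hvw (by simp [k, hB.1, hC.2.2]) (by simp [k, hB.2.1, hC.1])]
    simp [k, hu, hB.2.2, hC.2.1]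
  simp only [submodule_eq, Submodule.mem_sup, Submodule.mem_span_singleton] at hmem
  obtain ⟨_, ⟨a, rfl⟩, _, ⟨b, rfl⟩, hab⟩ := hmem
  have ha : a = 0 := by simpa [hB.1, hB.2.1, hB.2.2] using congr(B $hab)
  have hb : b = 0 := by simpa [hC.1, hC.2.1, hC.2.2] using congr(C $hab)
  exact u.rep_nonzero (by rw [← hab, ha, hb, zero_smul, zero_smul, add_zero])

theorem apply_eq_zero_iff_div_eq (hB : IsCoordFun B v.rep w.rep u.rep)
    (hC : IsCoordFun C w.rep u.rep v.rep) {h : (Fin 3 → F) →ₗ[F] F} (hu : h u.rep = 0)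
    (hv : h v.rep ≠ 0) {m : Fin 3 → F} (hm : C m ≠ 0) :
    h m = 0 ↔ B m / C m = -h w.rep / h v.rep := by
  rw [apply_eq_of_isCoordFun hB hC hu m, div_eq_div_iff hm hv]
  constructor <;> intro h <;> linear_combination h

end Pencil

section Secants

variable {F : Type} [Field F] [Finite F] {S : Set (Pt F)}

theorem eq_or_eq_of_secantCount_eq_two {u v p : Pt F} (hu : u ∈ S) (hv : v ∈ S) (huv : u ≠ v)
    (h2 : secantCount F S (u.submodule ⊔ v.submodule) = 2)
    (hp : p ∈ S) (hpW : p.submodule ≤ u.submodule ⊔ v.submodule) : p = u ∨ p = v := by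
  have hsub : {u, v} ⊆ {p ∈ S | p.submodule ≤ u.submodule ⊔ v.submodule} := by
    rintro q (rfl | rfl)
    exacts [⟨hu, le_sup_left⟩, ⟨hv, le_sup_right⟩]
  have heq := Set.eq_of_subset_of_ncard_le hsub
    (by rw [Set.ncard_pair huv]; exact h2.le) (Set.toFinite _)
  exact heq.symm.subset (show p ∈ _ from ⟨hp, hpW⟩)

theorem not_le_sup_of_secantCount_eq_two_s12 {u v w : Pt F} (hu : u ∈ S) (hv : v ∈ S) (hw : w ∈ S)
    (huv : u ≠ v) (huw : u ≠ w) (hvw : v ≠ w)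
    (h2 : secantCount F S (v.submodule ⊔ w.submodule) = 2) :
    ¬ u.submodule ≤ v.submodule ⊔ w.submodule := fun hle =>
  (eq_or_eq_of_secantCount_eq_two hv hw hvw h2 hu hle).elim huv huw

theorem apply_ne_zero_of_isCoordFun {f : (Fin 3 → F) →ₗ[F] F}
    {a b c p : Pt F} (hf : IsCoordFun f a.rep b.rep c.rep) (hb : b ∈ S) (hc : c ∈ S)
    (hbc : b ≠ c) (h2 : secantCount F S (b.submodule ⊔ c.submodule) = 2)
    (hp : p ∈ S) (hpb : p ≠ b) (hpc : p ≠ c) : f p.rep ≠ 0 := by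
  intro hfp
  have hf0 : f ≠ 0 := by rintro rfl; simp [IsCoordFun] at hf
  have hpW : p.submodule ≤ b.submodule ⊔ c.submodule := by
    rw [← ker_eq_sup hf0 hbc hf.2.1 hf.2.2, submodule_le_iff_rep_mem_s12]
    exact hfp
  exact (eq_or_eq_of_secantCount_eq_two hb hc hbc h2 hp hpW).elim hpb hpc

theorem exists_isCoordFun_triangle {x y z : Pt F} (hx : x ∈ S) (hy : y ∈ S) (hz : z ∈ S)
    (hxy : x ≠ y) (hxz : x ≠ z) (hyz : y ≠ z)
    (hbixy : secantCount F S (x.submodule ⊔ y.submodule) = 2)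
    (hbizx : secantCount F S (z.submodule ⊔ x.submodule) = 2)
    (hbiyz : secantCount F S (y.submodule ⊔ z.submodule) = 2) :
    ∃ A B C : (Fin 3 → F) →ₗ[F] F, IsCoordFun A x.rep y.rep z.rep ∧
      IsCoordFun B y.rep z.rep x.rep ∧ IsCoordFun C z.rep x.rep y.rep ∧
      ∀ p ∈ S \ {x, y, z}, A p.rep ≠ 0 ∧ B p.rep ≠ 0 ∧ C p.rep ≠ 0 := by
  obtain ⟨A, hA⟩ := exists_isCoordFun <|
    not_le_sup_of_secantCount_eq_two_s12 hx hy hz hxy hxz hyz hbiyz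
  obtain ⟨B, hB⟩ := exists_isCoordFun <|
    not_le_sup_of_secantCount_eq_two_s12 hy hz hx hyz hxy.symm hxz.symm hbizx
  obtain ⟨C, hC⟩ := exists_isCoordFun <|
    not_le_sup_of_secantCount_eq_two_s12 hz hx hy hxz.symm hyz.symm hxy hbixy
  refine ⟨A, B, C, hA, hB, hC, fun p hp => ?_⟩
  simp only [Set.mem_sdiff, Set.mem_insert_iff, Set.mem_singleton_iff, not_or] at hp
  obtain ⟨hpS, hpx, hpy, hpz⟩ := hp
  exact ⟨apply_ne_zero_of_isCoordFun hA hy hz hyz hbiyz hpS hpy hpz,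
    apply_ne_zero_of_isCoordFun hB hz hx hxz.symm hbizx hpS hpz hpx,
    apply_ne_zero_of_isCoordFun hC hx hy hxy hbixy hpS hpx hpy⟩

end Secants

section Vertex

open Finset

variable {F : Type} [Field F] {S : Set (Pt F)} {u v w : Pt F}
  {B C : (Fin 3 → F) →ₗ[F] F} {T : Finset (Pt F)}

theorem card_filter_div_eq_two [DecidableEq F] (hu : u ∈ S)
    (hB : IsCoordFun B v.rep w.rep u.rep) (hC : IsCoordFun C w.rep u.rep v.rep)
    (hT : (T : Set (Pt F)) = S \ {u, v, w})
    (hCT : ∀ p ∈ T, C p.rep ≠ 0) {g : (Fin 3 → F) →ₗ[F] F} (hgu : g u.rep = 0)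
    (hgv : g v.rep ≠ 0) (hgw : g w.rep ≠ 0) (hg3 : secantCount F S (ker g) = 3) :
    #{p ∈ T | B p.rep / C p.rep = -g w.rep / g v.rep} = 2 := by
  have hfiber : (↑{p ∈ T | B p.rep / C p.rep = -g w.rep / g v.rep} : Set (Pt F)) =
      {p ∈ S | p.submodule ≤ ker g} \ {u} := by
    ext p
    simp only [coe_filter, Set.mem_ofPred_eq, Set.mem_sdiff, Set.mem_singleton_iff,
      submodule_le_iff_rep_mem_s12, mem_ker]
    constructor
    · rintro ⟨hp, hslope⟩
      obtain ⟨hpS, hpu, -⟩ := (mem_iff_of_coe_eq_sdiff hT).1 hp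
      exact ⟨⟨hpS, (apply_eq_zero_iff_div_eq hB hC hgu hgv (hCT p hp)).2 hslope⟩, hpu⟩
    · rintro ⟨⟨hpS, hgp⟩, hpu⟩
      have hp : p ∈ T := (mem_iff_of_coe_eq_sdiff hT).2
        ⟨hpS, hpu, by rintro rfl; exact hgv hgp, by rintro rfl; exact hgw hgp⟩
      exact ⟨hp, (apply_eq_zero_iff_div_eq hB hC hgu hgv (hCT p hp)).1 hgp⟩
  have hu' : u ∈ {p ∈ S | p.submodule ≤ ker g} :=
    ⟨hu, (submodule_le_iff_rep_mem_s12 _ _).2 hgu⟩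
  rw [← Set.ncard_coe_finset, hfiber, Set.ncard_sdiff_singleton_of_mem hu']
  exact congr($hg3 - 1)

theorem div_ne_of_secantCount_ker_eq_one (hu : u ∈ S) (hB : IsCoordFun B v.rep w.rep u.rep)
    (hC : IsCoordFun C w.rep u.rep v.rep) (hT : (T : Set (Pt F)) = S \ {u, v, w})
    (hCT : ∀ p ∈ T, C p.rep ≠ 0) {ℓ : (Fin 3 → F) →ₗ[F] F} (hℓu : ℓ u.rep = 0)
    (hℓv : ℓ v.rep ≠ 0) (hℓ1 : secantCount F S (ker ℓ) = 1) :
    ∀ p ∈ T, B p.rep / C p.rep ≠ -ℓ w.rep / ℓ v.rep := fun p hp hslope => by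
  obtain ⟨hpS, hpu, -⟩ := (mem_iff_of_coe_eq_sdiff hT).1 hp
  have hℓp := (apply_eq_zero_iff_div_eq hB hC hℓu hℓv (hCT p hp)).2 hslope
  exact hpu (eq_of_secantCount_eq_one hℓ1 hu ((submodule_le_iff_rep_mem_s12 _ _).2 hℓu) hpS
    ((submodule_le_iff_rep_mem_s12 _ _).2 hℓp))

theorem exists_mem_div_eq (hu : u ∈ S) (hB : IsCoordFun B v.rep w.rep u.rep)
    (hC : IsCoordFun C w.rep u.rep v.rep) (hT : (T : Set (Pt F)) = S \ {u, v, w})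
    (hCT : ∀ p ∈ T, C p.rep ≠ 0) {ℓ : (Fin 3 → F) →ₗ[F] F} (hℓv : ℓ v.rep ≠ 0)
    (htan : ∀ W, IsLine F W → u.submodule ≤ W → secantCount F S W = 1 → W = ker ℓ)
    {t : F} (ht0 : t ≠ 0) (htℓ : t ≠ -ℓ w.rep / ℓ v.rep) :
    ∃ p ∈ T, B p.rep / C p.rep = t := by
  -- Otherwise the line `ker (B - t • C)` through `u` would be a tangent, hence `ker ℓ`.
  by_contra! hnone
  set k := B - t • C
  have hku : k u.rep = 0 := by simp [k, hB.2.2, hC.2.1]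
  have hkv : k v.rep = 1 := by simp [k, hB.1, hC.2.2]
  have hkw : k w.rep = -t := by simp [k, hB.2.1, hC.1]
  have hk0 : k ≠ 0 := by rintro h; simp [h] at hkv
  have hk1 : secantCount F S (ker k) = 1 := by
    rw [secantCount, Set.ncard_eq_one]
    refine ⟨u, Set.eq_singleton_iff_unique_mem.2 ⟨⟨hu, ?_⟩, ?_⟩⟩
    · rwa [submodule_le_iff_rep_mem_s12]
    rintro p ⟨hpS, hpk⟩
    rw [submodule_le_iff_rep_mem_s12, mem_ker] at hpk
    by_contra hpu
    have hp : p ∈ T := (mem_iff_of_coe_eq_sdiff hT).2 ⟨hpS, hpu, by rintro rfl; simp_all,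
      by rintro rfl; simp_all⟩
    have hslope := (apply_eq_zero_iff_div_eq hB hC hku (by simp [hkv]) (hCT p hp)).1 hpk
    rw [hkv, hkw, neg_neg, div_one] at hslope
    exact hnone p hp hslope
  have hmem : t • v.rep + w.rep ∈ ker k := by simp [mem_ker, hkv, hkw]
  rw [htan (ker k) (isLine_ker hk0) ((submodule_le_iff_rep_mem_s12 _ _).2 hku) hk1, mem_ker,
    map_add, map_smul, smul_eq_mul] at hmem
  exact htℓ (by field_simp; linear_combination hmem)

theorem prod_coord_div_coord_eq [Fintype F] (hS : S.ncard = Fintype.card F + 2)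
    (hu : u ∈ S) (hv : v ∈ S) (hw : w ∈ S)
    (huv2 : secantCount F S (u.submodule ⊔ v.submodule) = 2)
    (huw2 : secantCount F S (u.submodule ⊔ w.submodule) = 2)
    (hB : IsCoordFun B v.rep w.rep u.rep) (hC : IsCoordFun C w.rep u.rep v.rep)
    (hT : (T : Set (Pt F)) = S \ {u, v, w})
    {ℓ : (Fin 3 → F) →ₗ[F] F} (hℓ0 : ℓ ≠ 0) (hℓu : ℓ u.rep = 0)
    (h1 : linesThroughWithCount F S u 1 = 1)
    (htan : ∀ W, IsLine F W → u.submodule ≤ W → secantCount F S W = 1 → W = ker ℓ)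
    {g : (Fin 3 → F) →ₗ[F] F} (hg0 : g ≠ 0) (hgu : g u.rep = 0)
    (hg3 : secantCount F S (ker g) = 3) :
    ∏ p ∈ T, B p.rep / C p.rep = -(g w.rep * ℓ v.rep) / (g v.rep * ℓ w.rep) := by
  classical
  have huv : u ≠ v := by rintro rfl; exact one_ne_zero (hB.1.symm.trans hB.2.2)
  have huw : u ≠ w := by rintro rfl; exact one_ne_zero (hC.1.symm.trans hC.2.1)
  have hvw : v ≠ w := by rintro rfl; exact one_ne_zero (hB.1.symm.trans hB.2.1)
  have hℓ1 := secantCount_eq_one_of_unique_tangent h1 htan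
  have hℓv : ℓ v.rep ≠ 0 :=
    apply_ne_zero_of_secantCount_ne hℓ0 huv hℓu (by rw [hℓ1, huv2]; decide)
  have hℓw : ℓ w.rep ≠ 0 :=
    apply_ne_zero_of_secantCount_ne hℓ0 huw hℓu (by rw [hℓ1, huw2]; decide)
  have hgv : g v.rep ≠ 0 :=
    apply_ne_zero_of_secantCount_ne hg0 huv hgu (by rw [hg3, huv2]; decide)
  have hgw : g w.rep ≠ 0 :=
    apply_ne_zero_of_secantCount_ne hg0 huw hgu (by rw [hg3, huw2]; decide)
  have hBT : ∀ p ∈ T, B p.rep ≠ 0 := fun p hp => by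
    obtain ⟨hpS, hpu, -, hpw⟩ := (mem_iff_of_coe_eq_sdiff hT).1 hp
    exact apply_ne_zero_of_isCoordFun hB hw hu huw.symm (by rwa [sup_comm]) hpS hpw hpu
  have hCT : ∀ p ∈ T, C p.rep ≠ 0 := fun p hp => by
    obtain ⟨hpS, hpu, hpv, -⟩ := (mem_iff_of_coe_eq_sdiff hT).1 hp
    exact apply_ne_zero_of_isCoordFun hC hu hv huv huv2 hpS hpu hpv
  have hcard : #T + 1 = Fintype.card F := by
    have := Finset.card_add_three_of_coe_eq_sdiff hu hv hw huv huw hvw hT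
    omega
  rw [FiniteField.prod_eq_neg_div_of_card_fiber_eq_two (div_ne_zero (neg_ne_zero.2 hℓw) hℓv)
    hcard (fun p hp => div_ne_zero (hBT p hp) (hCT p hp))
    (div_ne_of_secantCount_ker_eq_one hu hB hC hT hCT hℓu hℓv hℓ1)
    (card_filter_div_eq_two hu hB hC hT hCT hgu hgv hgw hg3)
    (fun t ht0 htℓ _ => exists_mem_div_eq hu hB hC hT hCT hℓv htan ht0 htℓ)]
  field_simp

end Vertex

theorem three_secants_concurrent_general (F : Type) [Field F] [Fintype F]
    (S : Set (Pt F)) (hS : S.ncard = Fintype.card F + 2)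
    (x y z : Pt F) (hx : x ∈ S43 F S) (hy : y ∈ S43 F S) (hz : z ∈ S43 F S)
    (hxy : x ≠ y) (hxz : x ≠ z) (hyz : y ≠ z)
    (hbixy : secantCount F S (x.submodule ⊔ y.submodule) = 2)
    (hbixz : secantCount F S (x.submodule ⊔ z.submodule) = 2)
    (hbiyz : secantCount F S (y.submodule ⊔ z.submodule) = 2)
    (Q : QuadraticForm F (Fin 3 → F))
    (hQnd : LinearMap.BilinForm.Nondegenerate (QuadraticMap.polarBilin Q))
    (hQx : Q x.rep = 0) (hQy : Q y.rep = 0) (hQz : Q z.rep = 0)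
    (htan : ∀ u ∈ ({x, y, z} : Set (Pt F)), ∀ W : Submodule F (Fin 3 → F),
      IsLine F W → u.submodule ≤ W → secantCount F S W = 1 →
      W = LinearMap.ker (QuadraticMap.polarBilin Q u.rep))
    (gx gy gz : (Fin 3 → F) →ₗ[F] F)
    (hgx : gx ≠ 0 ∧ x.submodule ≤ LinearMap.ker gx ∧ secantCount F S (LinearMap.ker gx) = 3)
    (hgy : gy ≠ 0 ∧ y.submodule ≤ LinearMap.ker gy ∧ secantCount F S (LinearMap.ker gy) = 3)
    (hgz : gz ≠ 0 ∧ z.submodule ≤ LinearMap.ker gz ∧ secantCount F S (LinearMap.ker gz) = 3) :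
    gx z.rep * gy x.rep * gz y.rep = -(gx y.rep * gy z.rep * gz x.rep) ∧
    ∃ p : Pt F, p.submodule ≤ LinearMap.ker gx ∧ p.submodule ≤ LinearMap.ker gy ∧
      p.submodule ≤ LinearMap.ker gz := by
  obtain ⟨hxS, hx1, -⟩ := hx
  obtain ⟨hyS, hy1, -⟩ := hy
  obtain ⟨hzS, hz1, -⟩ := hz
  obtain ⟨hgx0, hgxx, hgx3⟩ := hgx
  obtain ⟨hgy0, hgyy, hgy3⟩ := hgy
  obtain ⟨hgz0, hgzz, hgz3⟩ := hgz
  rw [submodule_le_iff_rep_mem_s12, mem_ker] at hgxx hgyy hgzz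
  rw [sup_comm] at hbixz
  obtain ⟨A, B, C, hA, hB, hC, hcoord⟩ :=
    exists_isCoordFun_triangle hxS hyS hzS hxy hxz hyz hbixy hbixz hbiyz
  set T := (S \ {x, y, z}).toFinite.toFinset
  have hT : (T : Set (Pt F)) = S \ {x, y, z} := Set.Finite.coe_toFinset _
  have hone := Finset.prod_div_mul_prod_div_mul_prod_div_eq_one fun p hp =>
    hcoord p (hT ▸ Finset.mem_coe.2 hp)
  rw [prod_coord_div_coord_eq hS hxS hyS hzS hbixy (by rwa [sup_comm]) hB hC hT
      (polarBilin_ne_zero hQnd x.rep_nonzero) (polarBilin_self_eq_zero hQx) hx1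
      (htan x (by simp)) hgx0 hgxx hgx3,
    prod_coord_div_coord_eq hS hyS hzS hxS hbiyz (by rwa [sup_comm]) hC hA
      (by rw [hT, Set.insert_comm x y, Set.pair_comm x z])
      (polarBilin_ne_zero hQnd y.rep_nonzero) (polarBilin_self_eq_zero hQy) hy1
      (htan y (by simp)) hgy0 hgyy hgy3,
    prod_coord_div_coord_eq hS hzS hxS hyS hbixz (by rwa [sup_comm]) hA hB
      (by rw [hT, Set.pair_comm y z, Set.insert_comm x z])
      (polarBilin_ne_zero hQnd z.rep_nonzero) (polarBilin_self_eq_zero hQz) hz1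
      (htan z (by simp)) hgz0 hgzz hgz3] at hone
  simp only [polarBilin_apply_apply, polar_comm Q y.rep x.rep, polar_comm Q z.rep x.rep,
    polar_comm Q z.rep y.rep] at hone
  have hcyc := mul_mul_eq_neg_of_div_mul_div_mul_div_eq_one hone
  refine ⟨hcyc, exists_le_ker_of_mul_mul_eq_neg hC hgxx hgyy hgzz ?_ ?_ hcyc⟩
  · exact apply_ne_zero_of_secantCount_ne hgx0 hxy hgxx (by rw [hgx3, hbixy]; decide)
  · exact apply_ne_zero_of_secantCount_ne hgy0 hxy.symm hgyy
      (by rw [hgy3, sup_comm, hbixy]; decide)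

/-- If `x, y, z` are points of `S_{4/3}` lying on a nondegenerate conic whose tangent lines
at `x, y, z` are the tangents to `S` there, and the lines joining `x, y, z` are bi-secants
of `S`, then `g_x(z) g_y(x) g_z(y) = - g_x(y) g_y(z) g_z(x)` and the three `3`-secants
`ker g_x`, `ker g_y`, `ker g_z` are concurrent. -/
theorem three_secants_concurrent (F : Type) [Field F] [Fintype F]
    (hq : Odd (Fintype.card F))
    (S : Set (Pt F)) (hS : S.ncard = Fintype.card F + 2)
    (x y z : Pt F) (hx : x ∈ S43 F S) (hy : y ∈ S43 F S) (hz : z ∈ S43 F S)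
    (hxy : x ≠ y) (hxz : x ≠ z) (hyz : y ≠ z)
    (hbixy : secantCount F S (x.submodule ⊔ y.submodule) = 2)
    (hbixz : secantCount F S (x.submodule ⊔ z.submodule) = 2)
    (hbiyz : secantCount F S (y.submodule ⊔ z.submodule) = 2)
    (Q : QuadraticForm F (Fin 3 → F))
    (hQnd : LinearMap.BilinForm.Nondegenerate (QuadraticMap.polarBilin Q))
    (hQx : Q x.rep = 0) (hQy : Q y.rep = 0) (hQz : Q z.rep = 0)
    (htan : ∀ u ∈ ({x, y, z} : Set (Pt F)), ∀ W : Submodule F (Fin 3 → F),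
      IsLine F W → u.submodule ≤ W → secantCount F S W = 1 →
      W = LinearMap.ker (QuadraticMap.polarBilin Q u.rep))
    (gx gy gz : (Fin 3 → F) →ₗ[F] F)
    (hgx : gx ≠ 0 ∧ x.submodule ≤ LinearMap.ker gx ∧ secantCount F S (LinearMap.ker gx) = 3)
    (hgy : gy ≠ 0 ∧ y.submodule ≤ LinearMap.ker gy ∧ secantCount F S (LinearMap.ker gy) = 3)
    (hgz : gz ≠ 0 ∧ z.submodule ≤ LinearMap.ker gz ∧ secantCount F S (LinearMap.ker gz) = 3) :
    gx z.rep * gy x.rep * gz y.rep = -(gx y.rep * gy z.rep * gz x.rep) ∧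
    ∃ p : Pt F, p.submodule ≤ LinearMap.ker gx ∧ p.submodule ≤ LinearMap.ker gy ∧
      p.submodule ≤ LinearMap.ker gz :=
  three_secants_concurrent_general F S hS x y z hx hy hz hxy hxz hyz hbixy hbixz hbiyz Q hQnd hQx
    hQy hQz htan gx gy gz hgx hgy hgz
end
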